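/- arXiv:0812.1712 — 5 statements merged into one kernel-verified Lean document; each statement's English description precedes it below -/
import Mathlib

section
/- Let Φ : ℝ → ℝ be continuously differentiable, let σ ∈ ℝ, and let R, V : ℝ → ℝ be bounded continuously differentiable functions satisfying σ R′(φ) + V(φ+1) − V(φ) = 0 and σ V′(φ) + Φ′(R(φ)) − Φ′(R(φ−1)) = 0 for all φ ∈ ℝ, and suppose R(φ) → r₋, V(φ) → v₋ as φ → −∞ and R(φ) → r₊, V(φ) → v₊ as φ → +∞. Then the three jump conditions hold: σ(r₊ − r₋) + (v₊ − v₋) = 0, σ(v₊ − v₋) + (Φ′(r₊) − Φ′(r₋)) = 0, and σ(½v₊² + Φ(r₊) − ½v₋² − Φ(r₋)) + (Φ′(r₊)v₊ − Φ′(r₋)v₋) = 0. -/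
open Filter Topology MeasureTheory intervalIntegral

/-- The average `∫_S^{S+1} u` tends to the limit of `u` at `+∞`. -/
lemma tendsto_intShift_atTop (u : ℝ → ℝ) (hu : Continuous u) (L : ℝ)
    (h : Tendsto u atTop (𝓝 L)) :
    Tendsto (fun S : ℝ => ∫ x in S..(S + 1), u x) atTop (𝓝 L) := by
  rw [Metric.tendsto_atTop] at h ⊢
  intro ε hε
  obtain ⟨N, hN⟩ := h (ε / 2) (by positivity)
  refine ⟨N, fun S hS => ?_⟩
  have hsub : (∫ x in S..(S + 1), u x) - L = ∫ x in S..(S + 1), (u x - L) := by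
    rw [intervalIntegral.integral_sub (hu.intervalIntegrable _ _)
      (intervalIntegrable_const), intervalIntegral.integral_const]
    have : S + 1 - S = (1 : ℝ) := by ring
    rw [this, one_smul]
  have hb : ‖∫ x in S..(S + 1), (u x - L)‖ ≤ (ε / 2) * |(S + 1) - S| := by
    apply intervalIntegral.norm_integral_le_of_norm_le_const
    intro x hx
    rw [Set.uIoc_of_le (by linarith : S ≤ S + 1)] at hx
    have hxN : N ≤ x := le_trans hS (le_of_lt hx.1)
    have := hN x hxN
    rw [Real.dist_eq] at this
    simpa [Real.norm_eq_abs] using le_of_lt this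
  rw [Real.dist_eq, hsub]
  have : |(S + 1) - S| = 1 := by norm_num
  rw [this, mul_one] at hb
  calc |∫ x in S..(S + 1), (u x - L)| ≤ ε / 2 := hb
    _ < ε := by linarith

/-- The average `∫_S^{S+1} u` tends to the limit of `u` at `-∞`. -/
lemma tendsto_intShift_atBot (u : ℝ → ℝ) (hu : Continuous u) (L : ℝ)
    (h : Tendsto u atBot (𝓝 L)) :
    Tendsto (fun S : ℝ => ∫ x in S..(S + 1), u x) atBot (𝓝 L) := by
  rw [Metric.tendsto_nhds] at h ⊢
  intro ε hε
  obtain ⟨N, hN⟩ := eventually_atBot.1 (h (ε / 2) (by positivity))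
  rw [eventually_atBot]
  refine ⟨N - 1, fun S hS => ?_⟩
  have hsub : (∫ x in S..(S + 1), u x) - L = ∫ x in S..(S + 1), (u x - L) := by
    rw [intervalIntegral.integral_sub (hu.intervalIntegrable _ _)
      (intervalIntegrable_const), intervalIntegral.integral_const]
    have : S + 1 - S = (1 : ℝ) := by ring
    rw [this, one_smul]
  have hb : ‖∫ x in S..(S + 1), (u x - L)‖ ≤ (ε / 2) * |(S + 1) - S| := by
    apply intervalIntegral.norm_integral_le_of_norm_le_const
    intro x hx
    rw [Set.uIoc_of_le (by linarith : S ≤ S + 1)] at hx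
    have hxN : x ≤ N := le_trans hx.2 (by linarith)
    have := hN x hxN
    rw [Real.dist_eq] at this
    simpa [Real.norm_eq_abs] using le_of_lt this
  rw [Real.dist_eq, hsub]
  have h11 : |(S + 1) - S| = 1 := by norm_num
  rw [h11, mul_one] at hb
  calc |∫ x in S..(S + 1), (u x - L)| ≤ ε / 2 := hb
    _ < ε := by linarith

/-- Master jump-condition lemma: if `σ W' + (u − u(·−1)) = 0` pointwise, with `W, u`
having limits at `±∞`, then `σ (w₊ − w₋) + (u₊ − u₋) = 0`. -/
lemma jump_condition (σ : ℝ) (W W' u : ℝ → ℝ)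
    (hW : ∀ φ, HasDerivAt W (W' φ) φ) (hW' : Continuous W') (hu : Continuous u)
    (heq : ∀ φ, σ * W' φ + (u φ - u (φ - 1)) = 0)
    (wm wp um up : ℝ)
    (hWm : Tendsto W atBot (𝓝 wm)) (hWp : Tendsto W atTop (𝓝 wp))
    (hum : Tendsto u atBot (𝓝 um)) (hup : Tendsto u atTop (𝓝 up)) :
    σ * (wp - wm) + (up - um) = 0 := by
  have hint : ∀ a b : ℝ, IntervalIntegrable u volume a b :=
    fun a b => hu.intervalIntegrable a b
  have hu1 : Continuous (fun φ : ℝ => u (φ - 1)) :=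
    hu.comp (continuous_id.sub continuous_const)
  have key : ∀ T : ℝ, σ * (W T - W (-T))
      + ((∫ x in (T - 1)..T, u x) - ∫ x in (-T - 1)..(-T), u x) = 0 := by
    intro T
    have h0 : (∫ φ in (-T)..T, (σ * W' φ + (u φ - u (φ - 1)))) = 0 := by
      simp [heq]
    rw [intervalIntegral.integral_add (f := fun φ => σ * W' φ) (g := fun φ => u φ - u (φ - 1))
        ((continuous_const.mul hW').intervalIntegrable _ _)
      ((hu.sub hu1).intervalIntegrable _ _),
      intervalIntegral.integral_sub (hint _ _) (hu1.intervalIntegrable _ _),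
      intervalIntegral.integral_const_mul] at h0
    have hFTC : (∫ φ in (-T)..T, W' φ) = W T - W (-T) :=
      intervalIntegral.integral_eq_sub_of_hasDerivAt (fun x _ => hW x)
        (hW'.intervalIntegrable _ _)
    have hshift : (∫ φ in (-T)..T, u (φ - 1)) = ∫ x in (-T - 1)..(T - 1), u x := by
      simpa using intervalIntegral.integral_comp_sub_right u 1
    have adj1 : (∫ x in (-T - 1)..(-T), u x) + (∫ x in (-T)..(T - 1), u x)
        = ∫ x in (-T - 1)..(T - 1), u x :=
      intervalIntegral.integral_add_adjacent_intervals (hint _ _) (hint _ _)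
    have adj2 : (∫ x in (-T)..(T - 1), u x) + (∫ x in (T - 1)..T, u x)
        = ∫ x in (-T)..T, u x :=
      intervalIntegral.integral_add_adjacent_intervals (hint _ _) (hint _ _)
    rw [hFTC, hshift] at h0
    linarith
  -- limits of the three pieces
  have hA : Tendsto (fun T : ℝ => ∫ x in (T - 1)..T, u x) atTop (𝓝 up) := by
    have hcomp := (tendsto_intShift_atTop u hu up hup).comp
      (tendsto_atTop_add_const_right atTop (-1 : ℝ) tendsto_id)
    refine hcomp.congr fun T => ?_
    simp only [Function.comp, id]
    rw [show T + -1 = T - 1 by ring, show T - 1 + 1 = T by ring]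
  have hB : Tendsto (fun T : ℝ => ∫ x in (-T - 1)..(-T), u x) atTop (𝓝 um) := by
    have hneg : Tendsto (fun T : ℝ => -T - 1) atTop atBot := by
      have h0 : Tendsto (fun T : ℝ => -T) atTop atBot := tendsto_neg_atTop_atBot
      exact (tendsto_atBot_add_const_right atTop (-1 : ℝ) h0).congr (fun T => by ring)
    have hcomp := (tendsto_intShift_atBot u hu um hum).comp hneg
    refine hcomp.congr fun T => ?_
    simp only [Function.comp]
    rw [show -T - 1 + 1 = -T by ring]
  have hWT : Tendsto (fun T : ℝ => W (-T)) atTop (𝓝 wm) :=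
    hWm.comp tendsto_neg_atTop_atBot
  have total : Tendsto (fun T : ℝ => σ * (W T - W (-T))
      + ((∫ x in (T - 1)..T, u x) - ∫ x in (-T - 1)..(-T), u x)) atTop
      (𝓝 (σ * (wp - wm) + (up - um))) :=
    (tendsto_const_nhds.mul (hWp.sub hWT)).add (hA.sub hB)
  have hzero : Tendsto (fun T : ℝ => σ * (W T - W (-T))
      + ((∫ x in (T - 1)..T, u x) - ∫ x in (-T - 1)..(-T), u x)) atTop (𝓝 0) := by
    simp only [key]
    exact tendsto_const_nhds
  exact tendsto_nhds_unique total hzero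

theorem fpu_front_jump_conditions
    (Φ : ℝ → ℝ) (hΦ : ContDiff ℝ 1 Φ) (σ : ℝ)
    (R V : ℝ → ℝ) (hR : ContDiff ℝ 1 R) (hV : ContDiff ℝ 1 V)
    (hRb : ∃ C, ∀ φ, |R φ| ≤ C) (hVb : ∃ C, ∀ φ, |V φ| ≤ C)
    (heq1 : ∀ φ, σ * deriv R φ + V (φ + 1) - V φ = 0)
    (heq2 : ∀ φ, σ * deriv V φ + deriv Φ (R φ) - deriv Φ (R (φ - 1)) = 0)
    (rm rp vm vp : ℝ)
    (hRm : Tendsto R atBot (𝓝 rm)) (hRp : Tendsto R atTop (𝓝 rp))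
    (hVm : Tendsto V atBot (𝓝 vm)) (hVp : Tendsto V atTop (𝓝 vp)) :
    σ * (rp - rm) + (vp - vm) = 0 ∧
    σ * (vp - vm) + (deriv Φ rp - deriv Φ rm) = 0 ∧
    σ * ((1/2) * vp^2 + Φ rp - (1/2) * vm^2 - Φ rm)
      + (deriv Φ rp * vp - deriv Φ rm * vm) = 0 := by
  -- basic differentiability / continuity facts
  have hRd : ∀ φ, HasDerivAt R (deriv R φ) φ :=
    fun φ => ((hR.differentiable one_ne_zero) φ).hasDerivAt
  have hVd : ∀ φ, HasDerivAt V (deriv V φ) φ :=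
    fun φ => ((hV.differentiable one_ne_zero) φ).hasDerivAt
  have hΦd : ∀ x, HasDerivAt Φ (deriv Φ x) x :=
    fun x => ((hΦ.differentiable one_ne_zero) x).hasDerivAt
  have hR' : Continuous (deriv R) := hR.continuous_deriv le_rfl
  have hV' : Continuous (deriv V) := hV.continuous_deriv le_rfl
  have hΦ' : Continuous (deriv Φ) := hΦ.continuous_deriv le_rfl
  -- shift limits
  have hshift_top : Tendsto (fun φ : ℝ => φ + 1) atTop atTop :=
    tendsto_atTop_add_const_right atTop 1 tendsto_id
  have hshift_bot : Tendsto (fun φ : ℝ => φ + 1) atBot atBot :=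
    tendsto_atBot_add_const_right atBot 1 tendsto_id
  have hV1p : Tendsto (fun φ : ℝ => V (φ + 1)) atTop (𝓝 vp) := hVp.comp hshift_top
  have hV1m : Tendsto (fun φ : ℝ => V (φ + 1)) atBot (𝓝 vm) := hVm.comp hshift_bot
  have hfp : Tendsto (fun φ : ℝ => deriv Φ (R φ)) atTop (𝓝 (deriv Φ rp)) :=
    (hΦ'.tendsto rp).comp hRp
  have hfm : Tendsto (fun φ : ℝ => deriv Φ (R φ)) atBot (𝓝 (deriv Φ rm)) :=
    (hΦ'.tendsto rm).comp hRm
  -- first jump condition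
  have j1 : σ * (rp - rm) + (vp - vm) = 0 := by
    apply jump_condition σ R (deriv R) (fun φ => V (φ + 1)) hRd hR'
      (hV.continuous.comp (continuous_id.add continuous_const))
      (fun φ => ?_) rm rp vm vp hRm hRp hV1m hV1p
    show σ * deriv R φ + (V (φ + 1) - V (φ - 1 + 1)) = 0
    have h1 : φ - 1 + 1 = φ := by ring
    rw [h1]
    linarith [heq1 φ]
  -- second jump condition
  have j2 : σ * (vp - vm) + (deriv Φ rp - deriv Φ rm) = 0 := by
    apply jump_condition σ V (deriv V) (fun φ => deriv Φ (R φ)) hVd hV'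
      (hΦ'.comp hR.continuous) (fun φ => ?_) vm vp (deriv Φ rm) (deriv Φ rp)
      hVm hVp hfm hfp
    linarith [heq2 φ]
  -- third jump condition (energy)
  have j3 : σ * ((1/2) * vp^2 + Φ rp - (1/2) * vm^2 - Φ rm)
      + (deriv Φ rp * vp - deriv Φ rm * vm) = 0 := by
    set E : ℝ → ℝ := fun φ => (1/2) * (V φ)^2 + Φ (R φ) with hEdef
    set E' : ℝ → ℝ := fun φ => V φ * deriv V φ + deriv Φ (R φ) * deriv R φ with hE'def
    have hE : ∀ φ, HasDerivAt E (E' φ) φ := by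
      intro φ
      have h1 : HasDerivAt (fun φ => (1/2 : ℝ) * (V φ)^2) (V φ * deriv V φ) φ := by
        have := ((hVd φ).fun_pow 2).const_mul (1/2 : ℝ)
        refine this.congr_deriv ?_
        ring
      have h2 : HasDerivAt (fun φ => Φ (R φ)) (deriv Φ (R φ) * deriv R φ) φ :=
        (hΦd (R φ)).comp φ (hRd φ)
      exact h1.add h2
    have hE'c : Continuous E' :=
      (hV.continuous.mul hV').add ((hΦ'.comp hR.continuous).mul hR')
    have hg : Continuous (fun φ : ℝ => deriv Φ (R φ) * V (φ + 1)) :=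
      (hΦ'.comp hR.continuous).mul
        (hV.continuous.comp (continuous_id.add continuous_const))
    have hEp : Tendsto E atTop (𝓝 ((1/2) * vp^2 + Φ rp)) := by
      exact (tendsto_const_nhds.mul (hVp.pow 2)).add ((hΦ.continuous.tendsto rp).comp hRp)
    have hEm : Tendsto E atBot (𝓝 ((1/2) * vm^2 + Φ rm)) := by
      exact (tendsto_const_nhds.mul (hVm.pow 2)).add ((hΦ.continuous.tendsto rm).comp hRm)
    have hgp : Tendsto (fun φ : ℝ => deriv Φ (R φ) * V (φ + 1)) atTop
        (𝓝 (deriv Φ rp * vp)) := hfp.mul hV1p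
    have hgm : Tendsto (fun φ : ℝ => deriv Φ (R φ) * V (φ + 1)) atBot
        (𝓝 (deriv Φ rm * vm)) := hfm.mul hV1m
    have heqE : ∀ φ, σ * E' φ + ((fun φ : ℝ => deriv Φ (R φ) * V (φ + 1)) φ
        - (fun φ : ℝ => deriv Φ (R φ) * V (φ + 1)) (φ - 1)) = 0 := by
      intro φ
      have a1 : σ * deriv R φ = V φ - V (φ + 1) := by linarith [heq1 φ]
      have a2 : σ * deriv V φ = deriv Φ (R (φ - 1)) - deriv Φ (R φ) := by
        linarith [heq2 φ]
      show σ * (V φ * deriv V φ + deriv Φ (R φ) * deriv R φ)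
          + (deriv Φ (R φ) * V (φ + 1) - deriv Φ (R (φ - 1)) * V (φ - 1 + 1)) = 0
      have h1 : φ - 1 + 1 = φ := by ring
      rw [h1]
      linear_combination V φ * a2 + deriv Φ (R φ) * a1
    have := jump_condition σ E E' (fun φ : ℝ => deriv Φ (R φ) * V (φ + 1))
      hE hE'c hg heqE ((1/2) * vm^2 + Φ rm) ((1/2) * vp^2 + Φ rp)
      (deriv Φ rm * vm) (deriv Φ rp * vp) hEm hEp hgm hgp
    linarith [this]
  exact ⟨j1, j2, j3⟩
end

section
/- Let Φ : ℝ → ℝ be continuously differentiable, let r₋, r₊, v₋, v₊ ∈ ℝ with r₊ ≠ r₋, and let σ ≠ 0 satisfy σ(r₊ − r₋) + (v₊ − v₋) = 0 and σ(v₊ − v₋) + (Φ′(r₊) − Φ′(r₋)) = 0. Define the normalised potential Φ̂(w) = 4/((Φ′(r₊) − Φ′(r₋))(r₊ − r₋)) · Φ(½(r₊ + r₋) + ½(r₊ − r₋)w) − ((Φ′(r₊) + Φ′(r₋))/(Φ′(r₊) − Φ′(r₋))) · w. If W : ℝ → ℝ is a bounded continuous function with W(φ) → −1 as φ → −∞ and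 W(φ) → +1 as φ → +∞ satisfying W(φ) = (𝒜Φ̂′(𝒜W))(φ) for all φ, then the functions V(φ) := ½(v₊ + v₋) + ½(v₊ − v₋)W(φ) and R(φ) := ½(r₊ + r₋) + ½(r₊ − r₋)(𝒜W)(φ + ½) are continuously differentiable, satisfy σ R′(φ) + V(φ+1) − V(φ) = 0 and σ V′(φ) + Φ′(R(φ)) − Φ′(R(φ−1)) = 0 for all φ ∈ ℝ, and R(φ) → r±, V(φ) → v± as φ → ±∞. -/
open Filter Topology

/-- The averaging operator `(𝒜U)(φ) = ∫_{φ-1/2}^{φ+1/2} U(s) ds`. -/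
noncomputable def avg (U : ℝ → ℝ) (φ : ℝ) : ℝ := ∫ s in (φ - 1/2)..(φ + 1/2), U s

section
open MeasureTheory

lemma avg_hasDerivAt' {U : ℝ → ℝ} (hU : Continuous U) (φ : ℝ) :
    HasDerivAt (fun x => ∫ s in (x - 1/2)..(x + 1/2), U s) (U (φ + 1/2) - U (φ - 1/2)) φ := by
  have hint : ∀ a b : ℝ, IntervalIntegrable U volume a b := fun a b => hU.intervalIntegrable a b
  have hF : ∀ y : ℝ, HasDerivAt (fun x => ∫ t in (0:ℝ)..x, U t) (U y) y := fun y =>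
    intervalIntegral.integral_hasDerivAt_right (hint 0 y)
      (hU.stronglyMeasurableAtFilter _ _) hU.continuousAt
  have heq : (fun x => ∫ s in (x - 1/2)..(x + 1/2), U s)
      = fun x => (∫ t in (0:ℝ)..(x + 1/2), U t) - ∫ t in (0:ℝ)..(x - 1/2), U t := by
    funext x
    rw [eq_sub_iff_add_eq, add_comm]
    exact intervalIntegral.integral_add_adjacent_intervals (hint _ _) (hint _ _)
  rw [heq]
  have h1 : HasDerivAt (fun x : ℝ => ∫ t in (0:ℝ)..(x + 1/2), U t) (U (φ + 1/2)) φ := by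
    have := (hF (φ + 1/2)).comp φ ((hasDerivAt_id φ).add_const (1/2 : ℝ))
    simpa [Function.comp_def] using this
  have h2 : HasDerivAt (fun x : ℝ => ∫ t in (0:ℝ)..(x - 1/2), U t) (U (φ - 1/2)) φ := by
    have := (hF (φ - 1/2)).comp φ ((hasDerivAt_id φ).sub_const (1/2 : ℝ))
    simpa [Function.comp_def] using this
  exact h1.sub h2

lemma avg_tendsto_atTop' {U : ℝ → ℝ} (hU : Continuous U) {L : ℝ}
    (h : Tendsto U atTop (𝓝 L)) :
    Tendsto (fun x => ∫ s in (x - 1/2)..(x + 1/2), U s) atTop (𝓝 L) := by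
  rw [Metric.tendsto_atTop] at h ⊢
  intro ε hε
  obtain ⟨N, hN⟩ := h (ε/2) (by positivity)
  refine ⟨N + 1, fun φ hφ => ?_⟩
  have hle : φ - 1/2 ≤ φ + 1/2 := by linarith
  have hLint : (∫ _ in (φ-1/2)..(φ+1/2), L) = L := by
    rw [intervalIntegral.integral_const]; simp; ring
  have hdiff : (∫ s in (φ-1/2)..(φ+1/2), U s) - L
      = ∫ s in (φ-1/2)..(φ+1/2), (U s - L) := by
    rw [intervalIntegral.integral_sub (hU.intervalIntegrable _ _) intervalIntegrable_const, hLint]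
  rw [Real.dist_eq, hdiff]
  have hb : ‖∫ s in (φ-1/2)..(φ+1/2), (U s - L)‖ ≤ ε/2 * |(φ+1/2) - (φ-1/2)| := by
    apply intervalIntegral.norm_integral_le_of_norm_le_const
    intro x hx
    rw [Set.uIoc_of_le hle] at hx
    have hx1 : N ≤ x := by have := hx.1; linarith
    have := hN x hx1
    rw [Real.dist_eq] at this
    rw [Real.norm_eq_abs]
    linarith
  have : |(φ+1/2) - (φ-1/2)| = 1 := by rw [show (φ+1/2) - (φ-1/2) = 1 by ring]; norm_num
  rw [this] at hb
  rw [Real.norm_eq_abs] at hb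
  linarith

lemma avg_tendsto_atBot' {U : ℝ → ℝ} (hU : Continuous U) {L : ℝ}
    (h : Tendsto U atBot (𝓝 L)) :
    Tendsto (fun x => ∫ s in (x - 1/2)..(x + 1/2), U s) atBot (𝓝 L) := by
  rw [Metric.tendsto_nhds] at h ⊢
  intro ε hε
  simp only [eventually_atBot] at h ⊢
  obtain ⟨N, hN⟩ := h (ε/2) (by positivity)
  refine ⟨N - 1, fun φ hφ => ?_⟩
  have hN' : ∀ x ≤ N, |U x - L| < ε/2 := fun x hx => by
    have := hN x hx; rwa [Real.dist_eq] at this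
  have hle : φ - 1/2 ≤ φ + 1/2 := by linarith
  have hLint : (∫ _ in (φ-1/2)..(φ+1/2), L) = L := by
    rw [intervalIntegral.integral_const]; simp; ring
  have hdiff : (∫ s in (φ-1/2)..(φ+1/2), U s) - L
      = ∫ s in (φ-1/2)..(φ+1/2), (U s - L) := by
    rw [intervalIntegral.integral_sub (hU.intervalIntegrable _ _) intervalIntegrable_const, hLint]
  rw [Real.dist_eq, hdiff]
  have hb : ‖∫ s in (φ-1/2)..(φ+1/2), (U s - L)‖ ≤ ε/2 * |(φ+1/2) - (φ-1/2)| := by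
    apply intervalIntegral.norm_integral_le_of_norm_le_const
    intro x hx
    rw [Set.uIoc_of_le hle] at hx
    have hx1 : x ≤ N := by have := hx.2; linarith
    have := hN' x hx1
    rw [Real.norm_eq_abs]
    linarith
  have : |(φ+1/2) - (φ-1/2)| = 1 := by rw [show (φ+1/2) - (φ-1/2) = 1 by ring]; norm_num
  rw [this] at hb
  rw [Real.norm_eq_abs] at hb
  linarith

lemma avg_hasDerivAt {U : ℝ → ℝ} (hU : Continuous U) (φ : ℝ) :
    HasDerivAt (avg U) (U (φ + 1/2) - U (φ - 1/2)) φ := avg_hasDerivAt' hU φ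

lemma avg_tendsto_atTop {U : ℝ → ℝ} (hU : Continuous U) {L : ℝ}
    (h : Tendsto U atTop (𝓝 L)) : Tendsto (avg U) atTop (𝓝 L) := avg_tendsto_atTop' hU h

lemma avg_tendsto_atBot {U : ℝ → ℝ} (hU : Continuous U) {L : ℝ}
    (h : Tendsto U atBot (𝓝 L)) : Tendsto (avg U) atBot (𝓝 L) := avg_tendsto_atBot' hU h


end

theorem normalised_profile_gives_front
    (Φ : ℝ → ℝ) (hΦ : ContDiff ℝ 1 Φ)
    (rm rp vm vp σ : ℝ) (hr : rp ≠ rm) (hσ : σ ≠ 0)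
    (hj1 : σ * (rp - rm) + (vp - vm) = 0)
    (hj2 : σ * (vp - vm) + (deriv Φ rp - deriv Φ rm) = 0)
    (Φhat : ℝ → ℝ)
    (hΦhat : ∀ w, Φhat w =
      4 / ((deriv Φ rp - deriv Φ rm) * (rp - rm))
          * Φ ((rp + rm) / 2 + (rp - rm) / 2 * w)
        - (deriv Φ rp + deriv Φ rm) / (deriv Φ rp - deriv Φ rm) * w)
    (W : ℝ → ℝ) (hWc : Continuous W) (hWb : ∃ C, ∀ φ, |W φ| ≤ C)
    (hWm : Tendsto W atBot (𝓝 (-1))) (hWp : Tendsto W atTop (𝓝 1))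
    (hWeq : ∀ φ, W φ = avg (fun s => deriv Φhat (avg W s)) φ)
    (V R : ℝ → ℝ)
    (hV : ∀ φ, V φ = (vp + vm) / 2 + (vp - vm) / 2 * W φ)
    (hR : ∀ φ, R φ = (rp + rm) / 2 + (rp - rm) / 2 * avg W (φ + 1/2)) :
    ContDiff ℝ 1 R ∧ ContDiff ℝ 1 V ∧
    (∀ φ, σ * deriv R φ + V (φ + 1) - V φ = 0) ∧
    (∀ φ, σ * deriv V φ + deriv Φ (R φ) - deriv Φ (R (φ - 1)) = 0) ∧
    Tendsto R atBot (𝓝 rm) ∧ Tendsto R atTop (𝓝 rp) ∧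
    Tendsto V atBot (𝓝 vm) ∧ Tendsto V atTop (𝓝 vp) := by
  have hΦd : Differentiable ℝ Φ := hΦ.differentiable one_ne_zero
  have hΦ' : Continuous (deriv Φ) := hΦ.continuous_deriv le_rfl
  set d := deriv Φ rp - deriv Φ rm with hd_def
  have hrm : rp - rm ≠ 0 := sub_ne_zero.mpr hr
  have hd : d ≠ 0 := by
    have : d = σ^2 * (rp - rm) := by linear_combination hj2 - σ * hj1
    rw [this]
    exact mul_ne_zero (pow_ne_zero 2 hσ) hrm
  set A : ℝ := 4 / (d * (rp - rm)) with hA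
  set B : ℝ := (deriv Φ rp + deriv Φ rm) / d with hB
  have hfun : Φhat = fun w => A * Φ ((rp + rm) / 2 + (rp - rm) / 2 * w) - B * w :=
    funext hΦhat
  -- derivative of Φhat
  have hPd : ∀ w, HasDerivAt Φhat
      (A * (deriv Φ ((rp + rm) / 2 + (rp - rm) / 2 * w) * ((rp - rm) / 2)) - B) w := by
    intro w
    rw [hfun]
    have hin : HasDerivAt (fun x : ℝ => (rp + rm) / 2 + (rp - rm) / 2 * x)
        ((rp - rm) / 2) w := by
      simpa using ((hasDerivAt_id w).const_mul ((rp - rm) / 2)).const_add ((rp + rm) / 2)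
    have hcomp : HasDerivAt (fun x : ℝ => Φ ((rp + rm) / 2 + (rp - rm) / 2 * x))
        (deriv Φ ((rp + rm) / 2 + (rp - rm) / 2 * w) * ((rp - rm) / 2)) w :=
      (hΦd _).hasDerivAt.comp w hin
    exact (hcomp.const_mul A).sub (by simpa using (hasDerivAt_id w).const_mul B)
  have hDP : ∀ w, deriv Φhat w
      = A * (deriv Φ ((rp + rm) / 2 + (rp - rm) / 2 * w) * ((rp - rm) / 2)) - B :=
    fun w => (hPd w).deriv
  -- avg W and its properties
  have hAWd : ∀ φ, HasDerivAt (avg W) (W (φ + 1/2) - W (φ - 1/2)) φ := avg_hasDerivAt hWc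
  have hAWc : Continuous (avg W) :=
    continuous_iff_continuousAt.mpr fun φ => (hAWd φ).continuousAt
  set G : ℝ → ℝ := fun s => deriv Φhat (avg W s) with hG
  have hGc : Continuous G := by
    have : Continuous (deriv Φhat) := by
      rw [funext hDP]
      fun_prop
    exact this.comp hAWc
  -- W is differentiable
  have hWd : ∀ φ, HasDerivAt W (G (φ + 1/2) - G (φ - 1/2)) φ := by
    intro φ
    rw [show W = avg G from funext hWeq]
    exact avg_hasDerivAt hGc φ
  -- key identity: deriv Φ (R ψ) in terms of G
  have hkey : ∀ ψ, deriv Φ (R ψ)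
      = d / 2 * G (ψ + 1/2) + (deriv Φ rp + deriv Φ rm) / 2 := by
    intro ψ
    have h1 : G (ψ + 1/2) = A * (deriv Φ (R ψ) * ((rp - rm) / 2)) - B := by
      rw [hG]
      simp only
      rw [hDP, hR ψ]
    rw [h1, hA, hB]
    field_simp
    ring
  -- derivatives of R and V
  have hRd : ∀ φ, HasDerivAt R ((rp - rm) / 2 * (W (φ + 1) - W φ)) φ := by
    intro φ
    rw [show R = fun φ => (rp + rm) / 2 + (rp - rm) / 2 * avg W (φ + 1/2) from funext hR]
    have hsh : HasDerivAt (fun x : ℝ => avg W (x + 1/2)) (W (φ + 1) - W φ) φ := by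
      have h0 := (hAWd (φ + 1/2)).comp φ ((hasDerivAt_id φ).add_const (1/2 : ℝ))
      rw [show φ + 1/2 + 1/2 = φ + 1 by ring, show φ + 1/2 - 1/2 = φ by ring] at h0
      simpa [Function.comp_def] using h0
    simpa using (hsh.const_mul ((rp - rm) / 2)).const_add ((rp + rm) / 2)
  have hVd : ∀ φ, HasDerivAt V ((vp - vm) / 2 * (G (φ + 1/2) - G (φ - 1/2))) φ := by
    intro φ
    rw [show V = fun φ => (vp + vm) / 2 + (vp - vm) / 2 * W φ from funext hV]
    simpa using ((hWd φ).const_mul ((vp - vm) / 2)).const_add ((vp + vm) / 2)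
  refine ⟨?_, ?_, ?_, ?_, ?_, ?_, ?_, ?_⟩
  · rw [contDiff_one_iff_deriv]
    refine ⟨fun φ => (hRd φ).differentiableAt, ?_⟩
    rw [funext fun φ => (hRd φ).deriv]
    fun_prop
  · rw [contDiff_one_iff_deriv]
    refine ⟨fun φ => (hVd φ).differentiableAt, ?_⟩
    rw [funext fun φ => (hVd φ).deriv]
    fun_prop
  · intro φ
    rw [(hRd φ).deriv, hV (φ + 1), hV φ]
    linear_combination ((W (φ + 1) - W φ) / 2) * hj1
  · intro φ
    rw [(hVd φ).deriv, hkey φ, hkey (φ - 1), show φ - 1 + 1/2 = φ - 1/2 by ring]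
    linear_combination ((G (φ + 1/2) - G (φ - 1/2)) / 2) * hj2
  · have h1 : Tendsto (fun φ : ℝ => avg W (φ + 1/2)) atBot (𝓝 (-1)) :=
      (avg_tendsto_atBot hWc hWm).comp (tendsto_atBot_add_const_right _ _ tendsto_id)
    have h2 : Tendsto R atBot (𝓝 ((rp + rm) / 2 + (rp - rm) / 2 * (-1))) := by
      rw [show R = fun φ => (rp + rm) / 2 + (rp - rm) / 2 * avg W (φ + 1/2) from funext hR]
      exact (h1.const_mul ((rp - rm) / 2)).const_add _ |>.congr (fun _ => by ring) |>.congr (fun _ => rfl)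
    convert h2 using 2
    ring
  · have h1 : Tendsto (fun φ : ℝ => avg W (φ + 1/2)) atTop (𝓝 1) :=
      (avg_tendsto_atTop hWc hWp).comp (tendsto_atTop_add_const_right _ _ tendsto_id)
    have h2 : Tendsto R atTop (𝓝 ((rp + rm) / 2 + (rp - rm) / 2 * 1)) := by
      rw [show R = fun φ => (rp + rm) / 2 + (rp - rm) / 2 * avg W (φ + 1/2) from funext hR]
      exact (h1.const_mul ((rp - rm) / 2)).const_add _
    convert h2 using 2
    ring
  · have h2 : Tendsto V atBot (𝓝 ((vp + vm) / 2 + (vp - vm) / 2 * (-1))) := by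
      rw [show V = fun φ => (vp + vm) / 2 + (vp - vm) / 2 * W φ from funext hV]
      exact (hWm.const_mul ((vp - vm) / 2)).const_add _
    convert h2 using 2
    ring
  · have h2 : Tendsto V atTop (𝓝 ((vp + vm) / 2 + (vp - vm) / 2 * 1)) := by
      rw [show V = fun φ => (vp + vm) / 2 + (vp - vm) / 2 * W φ from funext hV]
      exact (hWp.const_mul ((vp - vm) / 2)).const_add _
    convert h2 using 2
    ring
end

section
/- Let Φ : ℝ → ℝ be twice continuously differentiable on [−1, 1] with Φ′(−1) = −1, Φ′(1) = 1, Φ(−1) = Φ(1), Φ″(−1) < 1 and Φ″(1) < 1, and suppose Φ′ is convex-concave on [−1, 1] in the sense that there exists w∗ ∈ [−1, 1] such that Φ″ is nondecreasing on [−1, w∗] and nonincreasing on [w∗, 1]. Then g_Φ(w) > 0 for all w ∈ (−1, 1), where g_Φ(w) = Φ(−1) − Φ(w) + ½w² − ½. -/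
open Set

theorem area_condition_from_convex_concave
    (Φ Φ' Φ'' : ℝ → ℝ)
    (hd1 : ∀ w ∈ Icc (-1 : ℝ) 1, HasDerivWithinAt Φ (Φ' w) (Icc (-1 : ℝ) 1) w)
    (hd2 : ∀ w ∈ Icc (-1 : ℝ) 1, HasDerivWithinAt Φ' (Φ'' w) (Icc (-1 : ℝ) 1) w)
    (hcont : ContinuousOn Φ'' (Icc (-1 : ℝ) 1))
    (hN1 : Φ' (-1) = -1) (hN2 : Φ' 1 = 1)
    (hE : Φ (-1) = Φ 1)
    (hS1 : Φ'' (-1) < 1) (hS2 : Φ'' 1 < 1)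
    (hcc : ∃ wstar ∈ Icc (-1 : ℝ) 1,
      MonotoneOn Φ'' (Icc (-1 : ℝ) wstar) ∧ AntitoneOn Φ'' (Icc wstar (1 : ℝ))) :
    ∀ w ∈ Ioo (-1 : ℝ) 1, 0 < Φ (-1) - Φ w + w ^ 2 / 2 - 1 / 2 := by
  obtain ⟨ws, hws, hmono, hanti⟩ := hcc
  set I : Set ℝ := Icc (-1 : ℝ) 1 with hIdef
  have h1 : (-1:ℝ) ∈ I := by constructor <;> norm_num
  have h2 : (1:ℝ) ∈ I := by constructor <;> norm_num
  set h : ℝ → ℝ := fun w => w - Φ' w with hhdef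
  have hdh : ∀ w ∈ I, HasDerivWithinAt h (1 - Φ'' w) I w := fun w hw =>
    (hasDerivWithinAt_id w I).sub (hd2 w hw)
  have hconth : ContinuousOn h I := fun w hw => (hdh w hw).continuousWithinAt
  have hhm1 : h (-1) = 0 := by simp [hhdef, hN1]
  have hh1 : h 1 = 0 := by simp [hhdef, hN2]
  set g : ℝ → ℝ := fun w => Φ (-1) - Φ w + w ^ 2 / 2 - 1 / 2 with hgdef
  have hdg : ∀ w ∈ I, HasDerivWithinAt g (h w) I w := by
    intro w hw
    have A : HasDerivWithinAt (fun x => Φ (-1) - Φ x + x ^ 2 / 2 - 1 / 2)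
        (0 - Φ' w + ((2:ℕ) * w ^ (2 - 1) * 1) / 2 - 0) I w :=
      (((hasDerivWithinAt_const w I (Φ (-1))).sub (hd1 w hw)).add
        (((hasDerivWithinAt_id w I).pow 2).div_const 2)).sub
        (hasDerivWithinAt_const w I (1/2))
    convert A using 1
    simp [hhdef]
    try ring
  have hcontg : ContinuousOn g I := fun w hw => (hdg w hw).continuousWithinAt
  have hgm1 : g (-1) = 0 := by norm_num [hgdef]
  have hg1 : g 1 = 0 := by simp [hgdef, hE]
  have hIoo : ∀ x ∈ Ioo (-1:ℝ) 1, I ∈ nhds x := fun x hx => Icc_mem_nhds hx.1 hx.2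
  have hdhat : ∀ x ∈ Ioo (-1:ℝ) 1, HasDerivAt h (1 - Φ'' x) x := fun x hx =>
    (hdh x (Ioo_subset_Icc_self hx)).hasDerivAt (hIoo x hx)
  have hdgat : ∀ x ∈ Ioo (-1:ℝ) 1, HasDerivAt g (h x) x := fun x hx =>
    (hdg x (Ioo_subset_Icc_self hx)).hasDerivAt (hIoo x hx)
  -- monotonicity helpers
  have monoH : ∀ u v : ℝ, -1 ≤ u → v ≤ 1 → (∀ x ∈ Ioo u v, Φ'' x ≤ 1) →
      MonotoneOn h (Icc u v) := by
    intro u v hu hv hk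
    have hsub : Ioo u v ⊆ Ioo (-1:ℝ) 1 := Ioo_subset_Ioo hu hv
    apply monotoneOn_of_deriv_nonneg (convex_Icc u v)
      (hconth.mono (Icc_subset_Icc hu hv))
    · intro x hx
      rw [interior_Icc] at hx
      exact ((hdhat x (hsub hx)).differentiableAt).differentiableWithinAt
    · intro x hx
      rw [interior_Icc] at hx
      rw [(hdhat x (hsub hx)).deriv]
      linarith [hk x hx]
  have antiH : ∀ u v : ℝ, -1 ≤ u → v ≤ 1 → (∀ x ∈ Ioo u v, 1 ≤ Φ'' x) →
      AntitoneOn h (Icc u v) := by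
    intro u v hu hv hk
    have hsub : Ioo u v ⊆ Ioo (-1:ℝ) 1 := Ioo_subset_Ioo hu hv
    apply antitoneOn_of_deriv_nonpos (convex_Icc u v)
      (hconth.mono (Icc_subset_Icc hu hv))
    · intro x hx
      rw [interior_Icc] at hx
      exact ((hdhat x (hsub hx)).differentiableAt).differentiableWithinAt
    · intro x hx
      rw [interior_Icc] at hx
      rw [(hdhat x (hsub hx)).deriv]
      linarith [hk x hx]
  have monoG : ∀ u v : ℝ, -1 ≤ u → v ≤ 1 → (∀ x ∈ Ioo u v, 0 ≤ h x) →
      MonotoneOn g (Icc u v) := by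
    intro u v hu hv hk
    have hsub : Ioo u v ⊆ Ioo (-1:ℝ) 1 := Ioo_subset_Ioo hu hv
    apply monotoneOn_of_deriv_nonneg (convex_Icc u v)
      (hcontg.mono (Icc_subset_Icc hu hv))
    · intro x hx
      rw [interior_Icc] at hx
      exact ((hdgat x (hsub hx)).differentiableAt).differentiableWithinAt
    · intro x hx
      rw [interior_Icc] at hx
      rw [(hdgat x (hsub hx)).deriv]
      exact hk x hx
  have antiG : ∀ u v : ℝ, -1 ≤ u → v ≤ 1 → (∀ x ∈ Ioo u v, h x ≤ 0) →
      AntitoneOn g (Icc u v) := by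
    intro u v hu hv hk
    have hsub : Ioo u v ⊆ Ioo (-1:ℝ) 1 := Ioo_subset_Ioo hu hv
    apply antitoneOn_of_deriv_nonpos (convex_Icc u v)
      (hcontg.mono (Icc_subset_Icc hu hv))
    · intro x hx
      rw [interior_Icc] at hx
      exact ((hdgat x (hsub hx)).differentiableAt).differentiableWithinAt
    · intro x hx
      rw [interior_Icc] at hx
      rw [(hdgat x (hsub hx)).deriv]
      exact hk x hx
  -- endpoint contradiction helper: h cannot vanish on a left neighborhood of -1
  have left_endpoint : ∀ w' : ℝ, -1 < w' → w' ≤ 1 →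
      (∀ t ∈ Icc (-1:ℝ) w', h t = 0) → False := by
    intro w' hw'1 hw'2 hz
    have hsub : Icc (-1:ℝ) w' ⊆ I := Icc_subset_Icc le_rfl hw'2
    have hmem : (-1:ℝ) ∈ Icc (-1:ℝ) w' := ⟨le_rfl, hw'1.le⟩
    have hA : HasDerivWithinAt h (1 - Φ'' (-1)) (Icc (-1:ℝ) w') (-1) :=
      (hdh _ h1).mono hsub
    have hB : HasDerivWithinAt h 0 (Icc (-1:ℝ) w') (-1) :=
      (hasDerivWithinAt_const (-1:ℝ) (Icc (-1:ℝ) w') (0:ℝ)).congr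
        (fun y hy => hz y hy) (hz _ hmem)
    have := (uniqueDiffOn_Icc hw'1 (-1) hmem).eq_deriv _ hA hB
    linarith
  have right_endpoint : ∀ w' : ℝ, w' < 1 → -1 ≤ w' →
      (∀ t ∈ Icc w' (1:ℝ), h t = 0) → False := by
    intro w' hw'1 hw'2 hz
    have hsub : Icc w' (1:ℝ) ⊆ I := Icc_subset_Icc hw'2 le_rfl
    have hmem : (1:ℝ) ∈ Icc w' (1:ℝ) := ⟨hw'1.le, le_rfl⟩
    have hA : HasDerivWithinAt h (1 - Φ'' 1) (Icc w' (1:ℝ)) 1 :=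
      (hdh _ h2).mono hsub
    have hB : HasDerivWithinAt h 0 (Icc w' (1:ℝ)) 1 :=
      (hasDerivWithinAt_const (1:ℝ) (Icc w' (1:ℝ)) (0:ℝ)).congr
        (fun y hy => hz y hy) (hz _ hmem)
    have := (uniqueDiffOn_Icc hw'1 1 hmem).eq_deriv _ hA hB
    linarith
  -- Step: Φ'' ws > 1
  have hkstar : 1 < Φ'' ws := by
    by_contra hk
    push_neg at hk
    have hle : ∀ x ∈ Ioo (-1:ℝ) 1, Φ'' x ≤ 1 := by
      intro x hx
      rcases le_total x ws with hxw | hxw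
      · exact le_trans (hmono ⟨hx.1.le, hxw⟩ ⟨hws.1, le_rfl⟩ hxw) hk
      · exact le_trans (hanti ⟨le_rfl, hws.2⟩ ⟨hxw, hx.2.le⟩ hxw) hk
    have hm := monoH (-1) 1 le_rfl le_rfl hle
    have hz : ∀ t ∈ Icc (-1:ℝ) 1, h t = 0 := by
      intro t ht
      have hA := hm h1 ht ht.1
      have hB := hm ht h2 ht.2
      rw [hhm1] at hA
      rw [hh1] at hB
      linarith
    exact left_endpoint 1 (by norm_num) le_rfl hz
  -- the point a
  have hclosed_a : IsClosed (Icc (-1:ℝ) ws ∩ Φ'' ⁻¹' Iic 1) :=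
    ContinuousOn.preimage_isClosed_of_isClosed
      (hcont.mono (Icc_subset_Icc le_rfl hws.2)) isClosed_Icc isClosed_Iic
  have hcomp_a : IsCompact (Icc (-1:ℝ) ws ∩ Φ'' ⁻¹' Iic 1) :=
    isCompact_Icc.of_isClosed_subset hclosed_a inter_subset_left
  have hne_a : (Icc (-1:ℝ) ws ∩ Φ'' ⁻¹' Iic 1).Nonempty :=
    ⟨-1, ⟨⟨le_rfl, hws.1⟩, hS1.le⟩⟩
  set a := sSup (Icc (-1:ℝ) ws ∩ Φ'' ⁻¹' Iic 1) with hadef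
  have ha_mem := hcomp_a.sSup_mem hne_a
  have ha_Icc : a ∈ Icc (-1:ℝ) ws := ha_mem.1
  have ha_le : Φ'' a ≤ 1 := ha_mem.2
  have ha_ub : ∀ t, t ∈ Icc (-1:ℝ) ws → Φ'' t ≤ 1 → t ≤ a := fun t ht h' =>
    le_csSup hcomp_a.bddAbove ⟨ht, h'⟩
  have ha_lt : a < ws := lt_of_le_of_ne ha_Icc.2 (fun he => by
    rw [he] at ha_le; linarith)
  have hleft_le : ∀ t ∈ Icc (-1:ℝ) a, Φ'' t ≤ 1 := fun t ht =>
    le_trans (hmono ⟨ht.1, le_trans ht.2 ha_Icc.2⟩ ha_Icc ht.2) ha_le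
  have hmid_left : ∀ t, a < t → t ≤ ws → 1 < Φ'' t := by
    intro t ht1 ht2
    by_contra h'
    push_neg at h'
    exact absurd (ha_ub t ⟨le_trans ha_Icc.1 ht1.le, ht2⟩ h') (not_le.mpr ht1)
  -- the point b
  have hclosed_b : IsClosed (Icc ws (1:ℝ) ∩ Φ'' ⁻¹' Iic 1) :=
    ContinuousOn.preimage_isClosed_of_isClosed
      (hcont.mono (Icc_subset_Icc hws.1 le_rfl)) isClosed_Icc isClosed_Iic
  have hcomp_b : IsCompact (Icc ws (1:ℝ) ∩ Φ'' ⁻¹' Iic 1) :=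
    isCompact_Icc.of_isClosed_subset hclosed_b inter_subset_left
  have hne_b : (Icc ws (1:ℝ) ∩ Φ'' ⁻¹' Iic 1).Nonempty :=
    ⟨1, ⟨⟨hws.2, le_rfl⟩, hS2.le⟩⟩
  set b := sInf (Icc ws (1:ℝ) ∩ Φ'' ⁻¹' Iic 1) with hbdef
  have hb_mem := hcomp_b.sInf_mem hne_b
  have hb_Icc : b ∈ Icc ws (1:ℝ) := hb_mem.1
  have hb_le : Φ'' b ≤ 1 := hb_mem.2
  have hb_lb : ∀ t, t ∈ Icc ws (1:ℝ) → Φ'' t ≤ 1 → b ≤ t := fun t ht h' =>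
    csInf_le hcomp_b.bddBelow ⟨ht, h'⟩
  have hb_gt : ws < b := lt_of_le_of_ne hb_Icc.1 (fun he => by
    rw [← he] at hb_le
    linarith)
  have hright_le : ∀ t ∈ Icc b (1:ℝ), Φ'' t ≤ 1 := fun t ht =>
    le_trans (hanti hb_Icc ⟨le_trans hb_Icc.1 ht.1, ht.2⟩ ht.1) hb_le
  have hmid_right : ∀ t, ws ≤ t → t < b → 1 < Φ'' t := by
    intro t ht1 ht2
    by_contra h'
    push_neg at h'
    exact absurd (hb_lb t ⟨ht1, le_trans ht2.le hb_Icc.2⟩ h') (not_le.mpr ht2)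
  have hab : a < b := lt_trans ha_lt hb_gt
  -- h monotone pattern
  have hm_left : MonotoneOn h (Icc (-1:ℝ) a) :=
    monoH (-1) a le_rfl (le_trans ha_Icc.2 hws.2)
      (fun x hx => hleft_le x (Ioo_subset_Icc_self hx))
  have hm_mid : AntitoneOn h (Icc a b) := by
    apply antiH a b ha_Icc.1 hb_Icc.2
    intro x hx
    rcases le_total x ws with hxw | hxw
    · exact (hmid_left x hx.1 hxw).le
    · exact (hmid_right x hxw hx.2).le
  have hm_right : MonotoneOn h (Icc b (1:ℝ)) :=
    monoH b 1 (le_trans ha_Icc.1 hab.le) le_rfl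
      (fun x hx => hright_le x (Ioo_subset_Icc_self hx))
  have hm1a : (-1:ℝ) ≤ a := ha_Icc.1
  have hb1 : b ≤ 1 := hb_Icc.2
  have h_nonneg_left : ∀ t ∈ Icc (-1:ℝ) a, 0 ≤ h t := by
    intro t ht
    have := hm_left ⟨le_rfl, hm1a⟩ ht ht.1
    rw [hhm1] at this; exact this
  have h_nonpos_right : ∀ t ∈ Icc b (1:ℝ), h t ≤ 0 := by
    intro t ht
    have := hm_right ht ⟨hb1, le_rfl⟩ ht.2
    rw [hh1] at this; exact this
  -- the crossing point c
  have hcontb : ContinuousOn h (Icc a b) :=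
    hconth.mono (Icc_subset_Icc hm1a hb1)
  have hclosed_c : IsClosed (Icc a b ∩ h ⁻¹' Ici 0) :=
    ContinuousOn.preimage_isClosed_of_isClosed hcontb isClosed_Icc isClosed_Ici
  have hcomp_c : IsCompact (Icc a b ∩ h ⁻¹' Ici 0) :=
    isCompact_Icc.of_isClosed_subset hclosed_c inter_subset_left
  have hne_c : (Icc a b ∩ h ⁻¹' Ici 0).Nonempty :=
    ⟨a, ⟨⟨le_rfl, hab.le⟩, h_nonneg_left a ⟨hm1a, le_rfl⟩⟩⟩
  set c := sSup (Icc a b ∩ h ⁻¹' Ici 0) with hcdef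
  have hc_mem := hcomp_c.sSup_mem hne_c
  have hc_Icc : c ∈ Icc a b := hc_mem.1
  have hc_nonneg : 0 ≤ h c := hc_mem.2
  have hc_ub : ∀ t, t ∈ Icc a b → 0 ≤ h t → t ≤ c := fun t ht h' =>
    le_csSup hcomp_c.bddAbove ⟨ht, h'⟩
  have hm1c : (-1:ℝ) ≤ c := le_trans hm1a hc_Icc.1
  have hc1 : c ≤ 1 := le_trans hc_Icc.2 hb1
  -- h ≥ 0 on [-1, c], h ≤ 0 on (c, 1]
  have Hpos : ∀ t ∈ Icc (-1:ℝ) c, 0 ≤ h t := by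
    intro t ht
    rcases le_total t a with hta | hta
    · exact h_nonneg_left t ⟨ht.1, hta⟩
    · exact le_trans hc_nonneg (hm_mid ⟨hta, le_trans ht.2 hc_Icc.2⟩ hc_Icc ht.2)
  have Hneg : ∀ t, c < t → t ≤ 1 → h t ≤ 0 := by
    intro t htc ht1
    rcases le_total t b with htb | htb
    · by_contra h'
      push_neg at h'
      exact absurd (hc_ub t ⟨le_trans hc_Icc.1 htc.le, htb⟩ h'.le) (not_le.mpr htc)
    · exact h_nonpos_right t ⟨htb, ht1⟩
  -- g monotone then antitone
  have gmono : MonotoneOn g (Icc (-1:ℝ) c) :=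
    monoG (-1) c le_rfl hc1 (fun x hx => Hpos x (Ioo_subset_Icc_self hx))
  have ganti : AntitoneOn g (Icc c (1:ℝ)) :=
    antiG c 1 hm1c le_rfl (fun x hx => Hneg x hx.1 hx.2.le)
  -- main argument
  intro w hw
  have hwI : w ∈ I := Ioo_subset_Icc_self hw
  have hge : 0 ≤ g w := by
    rcases le_total w c with hwc | hwc
    · have := gmono ⟨le_rfl, hm1c⟩ ⟨hw.1.le, hwc⟩ hw.1.le
      rw [hgm1] at this; exact this
    · have := ganti ⟨hwc, hw.2.le⟩ ⟨hc1, le_rfl⟩ hw.2.le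
      rw [hg1] at this; exact this
  rcases eq_or_lt_of_le hge with heq | hlt
  · exfalso
    rcases le_total w c with hwc | hwc
    · -- g ≡ 0 on [-1, w], so h ≡ 0 near -1
      have hg0 : ∀ t ∈ Icc (-1:ℝ) w, g t = 0 := by
        intro t ht
        have h1' := gmono ⟨le_rfl, hm1c⟩ ⟨ht.1, le_trans ht.2 hwc⟩ ht.1
        have h2' := gmono ⟨ht.1, le_trans ht.2 hwc⟩ ⟨hw.1.le, hwc⟩ ht.2
        rw [hgm1] at h1'
        linarith [heq]
      have hzero : ∀ t ∈ Ioo (-1:ℝ) w, h t = 0 := by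
        intro t ht
        have htI : t ∈ Ioo (-1:ℝ) 1 := ⟨ht.1, lt_trans ht.2 hw.2⟩
        have hc0 : HasDerivAt g 0 t := by
          refine (hasDerivAt_const t (0:ℝ)).congr_of_eventuallyEq ?_
          filter_upwards [Ioo_mem_nhds ht.1 ht.2] with y hy
          exact hg0 y ⟨hy.1.le, hy.2.le⟩
        exact (hdgat t htI).unique hc0
      set w' := (-1 + w) / 2 with hw'def
      have hw'1 : -1 < w' := by rw [hw'def]; linarith [hw.1]
      have hw'2 : w' < w := by rw [hw'def]; linarith [hw.1]
      apply left_endpoint w' hw'1 (by linarith [hw.2])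
      intro t ht
      rcases eq_or_lt_of_le ht.1 with he | hlt'
      · rw [← he]; exact hhm1
      · exact hzero t ⟨hlt', lt_of_le_of_lt ht.2 hw'2⟩
    · -- g ≡ 0 on [w, 1], so h ≡ 0 near 1
      have hg0 : ∀ t ∈ Icc w (1:ℝ), g t = 0 := by
        intro t ht
        have h1' := ganti ⟨hwc, hw.2.le⟩ ⟨le_trans hwc ht.1, ht.2⟩ ht.1
        have h2' := ganti ⟨le_trans hwc ht.1, ht.2⟩ ⟨hc1, le_rfl⟩ ht.2
        rw [hg1] at h2'
        linarith [heq]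
      have hzero : ∀ t ∈ Ioo w (1:ℝ), h t = 0 := by
        intro t ht
        have htI : t ∈ Ioo (-1:ℝ) 1 := ⟨lt_trans hw.1 ht.1, ht.2⟩
        have hc0 : HasDerivAt g 0 t := by
          refine (hasDerivAt_const t (0:ℝ)).congr_of_eventuallyEq ?_
          filter_upwards [Ioo_mem_nhds ht.1 ht.2] with y hy
          exact hg0 y ⟨hy.1.le, hy.2.le⟩
        exact (hdgat t htI).unique hc0
      set w' := (w + 1) / 2 with hw'def
      have hw'1 : w' < 1 := by rw [hw'def]; linarith [hw.2]
      have hw'2 : w < w' := by rw [hw'def]; linarith [hw.2]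
      apply right_endpoint w' hw'1 (by linarith [hw.1])
      intro t ht
      rcases eq_or_lt_of_le ht.2 with he | hlt'
      · rw [he]; exact hh1
      · exact hzero t ⟨lt_of_lt_of_le hw'2 ht.1, hlt'⟩
  · show 0 < g w
    exact hlt
end

section
/- Let Φ : ℝ → ℝ be twice continuously differentiable with Φ′(−1) = −1 and Φ′(1) = 1, and let W : ℝ → ℝ be measurable with W_sh − W ∈ L²(ℝ). Then: (i) the functions W − Φ′(𝒜W) and W − 𝒜Φ′(𝒜W) belong to L²(ℝ); (ii) for every μ ∈ L²(ℝ), lim_{M→∞} ∫_{−M}^{M} [ Φ′((𝒜W)(φ)) (𝒜μ)(φ) − (𝒜Φ′(𝒜W))(φ) μ(φ) ] dφ = 0. -/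
open MeasureTheory Filter Topology

/-- The shock profile connecting `-1` to `1`. -/
noncomputable def Wsh : ℝ → ℝ := fun φ => if 0 ≤ φ then 1 else -1

open Set
open scoped ENNReal NNReal

lemma wsh_meas : Measurable Wsh :=
  Measurable.ite (measurableSet_le measurable_const measurable_id) measurable_const
    measurable_const

lemma wsh_abs (φ : ℝ) : |Wsh φ| ≤ 1 := by unfold Wsh; split <;> norm_num

lemma memL2_intervalIntegrable {f : ℝ → ℝ} (hf : MemLp f 2 volume) (a b : ℝ) :
    IntervalIntegrable f volume a b := by
  rw [intervalIntegrable_iff]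
  have : IsFiniteMeasure (volume.restrict (Set.uIoc a b)) :=
    ⟨by rw [Measure.restrict_apply_univ]; exact measure_Ioc_lt_top⟩
  exact memLp_one_iff_integrable.mp
    (MemLp.mono_exponent (hf.restrict _) (by norm_num))

lemma integrableOn_of_L2 {f : ℝ → ℝ} (hf : MemLp f 2 volume) {s : Set ℝ}
    (h : volume s ≠ ⊤) : IntegrableOn f s volume := by
  have : IsFiniteMeasure (volume.restrict s) :=
    ⟨by rw [Measure.restrict_apply_univ]; exact lt_top_iff_ne_top.mpr h⟩
  exact memLp_one_iff_integrable.mp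
    (MemLp.mono_exponent (hf.restrict _) (by norm_num))

lemma bdd_intervalIntegrable {f : ℝ → ℝ} (hm : Measurable f) {C : ℝ} (h : ∀ x, |f x| ≤ C)
    (a b : ℝ) : IntervalIntegrable f volume a b := by
  rw [intervalIntegrable_iff]
  refine Integrable.mono' (g := fun _ => C) (integrableOn_const measure_Ioc_lt_top.ne)
    hm.aestronglyMeasurable.restrict (Eventually.of_forall fun x => ?_)
  simpa [Real.norm_eq_abs] using h x

lemma avg_eq (f : ℝ → ℝ) (φ : ℝ) : avg f φ = ∫ s in Ioc (φ - 1/2) (φ + 1/2), f s := by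
  rw [avg, intervalIntegral.integral_of_le (by linarith)]

lemma cs_helper {f : ℝ → ℝ} (hm : Measurable f) {E : Set ℝ}
    (hvol : volume E ≠ ⊤) (hf2 : IntegrableOn (fun s => f s ^ 2) E volume) :
    ∫ s in E, |f s| ≤ Real.sqrt (volume E).toReal * Real.sqrt (∫ s in E, f s ^ 2) := by
  have hfin : IsFiniteMeasure (volume.restrict E) :=
    ⟨by rw [Measure.restrict_apply_univ]; exact lt_top_iff_ne_top.mpr hvol⟩
  have h2 : MemLp f 2 (volume.restrict E) :=
    (memLp_two_iff_integrable_sq hm.aestronglyMeasurable).mpr hf2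
  have hone : MemLp (fun _ : ℝ => (1 : ℝ)) 2 (volume.restrict E) := memLp_const 1
  have hconj : Real.HolderConjugate 2 2 := Real.HolderConjugate.two_two
  have key := integral_mul_le_Lp_mul_Lq_of_nonneg (μ := volume.restrict E) hconj
    (f := fun s => |f s|) (g := fun _ => (1 : ℝ))
    (Eventually.of_forall fun x => abs_nonneg _) (Eventually.of_forall fun x => zero_le_one)
    (by rw [show ENNReal.ofReal 2 = 2 by norm_num]; exact h2.abs)
    (by simpa [show ENNReal.ofReal 2 = 2 by norm_num] using hone)
  have hrpow : ∀ x : ℝ, x ^ (2:ℝ) = x ^ 2 := fun x => by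
    rw [show (2:ℝ) = ((2:ℕ):ℝ) by norm_num, Real.rpow_natCast]
  simp only [mul_one, hrpow, one_pow, sq_abs] at key
  have h3 : ∫ _ in E, (1:ℝ) = (volume E).toReal := by simp [Measure.real]
  rw [h3] at key
  calc ∫ s in E, |f s| ≤ (∫ s in E, f s ^ 2) ^ ((1:ℝ)/2) * (volume E).toReal ^ ((1:ℝ)/2) := key
    _ = Real.sqrt (volume E).toReal * Real.sqrt (∫ s in E, f s ^ 2) := by
        rw [Real.sqrt_eq_rpow, Real.sqrt_eq_rpow]; ring

lemma unit_int_abs_le {f : ℝ → ℝ} (hm : Measurable f) (hf : MemLp f 2 volume) (φ : ℝ) :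
    ∫ s in Ioc (φ - 1/2) (φ + 1/2), |f s| ≤ Real.sqrt (∫ s, f s ^ 2) := by
  have hsq := hf.integrable_sq
  have h1 : volume (Ioc (φ - 1/2) (φ + 1/2)) = 1 := by
    rw [Real.volume_Ioc]
    norm_num
  calc ∫ s in Ioc (φ - 1/2) (φ + 1/2), |f s|
      ≤ Real.sqrt (volume (Ioc (φ - 1/2) (φ + 1/2))).toReal *
        Real.sqrt (∫ s in Ioc (φ - 1/2) (φ + 1/2), f s ^ 2) :=
        cs_helper hm (by rw [h1]; exact ENNReal.one_ne_top) hsq.integrableOn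
    _ = Real.sqrt (∫ s in Ioc (φ - 1/2) (φ + 1/2), f s ^ 2) := by rw [h1]; simp
    _ ≤ Real.sqrt (∫ s, f s ^ 2) := Real.sqrt_le_sqrt
        (setIntegral_le_integral hsq (Eventually.of_forall fun x => sq_nonneg _))

lemma avg_abs_le {f : ℝ → ℝ} (hm : Measurable f) (hf : MemLp f 2 volume) (φ : ℝ) :
    |avg f φ| ≤ Real.sqrt (∫ s, f s ^ 2) := by
  rw [avg_eq]
  refine le_trans ?_ (unit_int_abs_le hm hf φ)
  simpa [Real.norm_eq_abs] using
    norm_integral_le_integral_norm (μ := volume.restrict (Ioc (φ - 1/2) (φ + 1/2))) f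

lemma avg_continuous {f : ℝ → ℝ} (hf : ∀ a b, IntervalIntegrable f volume a b) :
    Continuous (avg f) := by
  have hc := intervalIntegral.continuous_primitive hf 0
  have heq : avg f = fun φ =>
      (∫ t in (0:ℝ)..(φ + 1/2), f t) - ∫ t in (0:ℝ)..(φ - 1/2), f t := by
    funext φ
    rw [avg, ← intervalIntegral.integral_interval_sub_left (hf 0 (φ + 1/2)) (hf 0 (φ - 1/2))]
  rw [heq]
  exact (hc.comp (by fun_prop)).sub (hc.comp (by fun_prop))

lemma ae_ne_zero : ∀ᵐ (x : ℝ), x ≠ 0 := by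
  rw [ae_iff]
  convert Real.volume_singleton (a := 0) using 2
  ext x; simp

lemma avg_wsh_of_ge {φ : ℝ} (h : 1/2 ≤ φ) : avg Wsh φ = 1 := by
  rw [avg]
  rw [intervalIntegral.integral_congr (g := fun _ => (1:ℝ))
    (fun s hs => by
      rw [Set.uIcc_of_le (by linarith)] at hs
      have : (0:ℝ) ≤ s := by have := hs.1; linarith
      simp [Wsh, this])]
  simp
  norm_num

lemma avg_wsh_of_le {φ : ℝ} (h : φ ≤ -(1/2)) : avg Wsh φ = -1 := by
  rw [avg]
  rw [intervalIntegral.integral_congr_ae (g := fun _ => (-1:ℝ)) ?_]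
  · simp
    norm_num
  · filter_upwards [ae_ne_zero] with x hx hmem
    rw [Set.uIoc_of_le (by linarith)] at hmem
    have : ¬ (0:ℝ) ≤ x := by
      have h2 := hmem.2
      intro h0
      exact hx (le_antisymm (by linarith) h0)
    simp [Wsh, this]

lemma avg_wsh_abs (φ : ℝ) : |avg Wsh φ| ≤ 1 := by
  have := intervalIntegral.norm_integral_le_of_norm_le_const (C := 1)
    (f := Wsh) (a := φ - 1/2) (b := φ + 1/2)
    (fun x _ => by simpa [Real.norm_eq_abs] using wsh_abs x)
  rw [avg]
  calc |∫ s in (φ - 1/2)..(φ + 1/2), Wsh s| ≤ 1 * |φ + 1/2 - (φ - 1/2)| := by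
        simpa [Real.norm_eq_abs] using this
    _ = 1 := by norm_num

lemma avg_memL2 {f : ℝ → ℝ} (hm : Measurable f) (hf : MemLp f 2 volume) :
    MemLp (avg f) 2 volume := by
  have hcont : Continuous (avg f) := avg_continuous (memL2_intervalIntegrable hf)
  rw [memLp_two_iff_integrable_sq hcont.aestronglyMeasurable]
  set S : Set (ℝ × ℝ) := {q : ℝ × ℝ | q.1 - 1/2 < q.2 ∧ q.2 ≤ q.1 + 1/2} with hS_def
  have hSmeas : MeasurableSet S :=
    (measurableSet_lt (measurable_fst.sub measurable_const) measurable_snd).inter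
      (measurableSet_le measurable_snd (measurable_fst.add measurable_const))
  set F : ℝ × ℝ → ℝ := fun p => Set.indicator S (fun q => f q.2 ^ 2) p with hF_def
  have hFmeas : Measurable F :=
    ((hm.comp measurable_snd).pow_const 2).indicator hSmeas
  have hFslice : ∀ φ : ℝ, (fun s => F (φ, s)) =
      Set.indicator (Ioc (φ - 1/2) (φ + 1/2)) (fun s => f s ^ 2) := by
    intro φ; funext s
    simp only [hF_def]
    by_cases hs : s ∈ Ioc (φ - 1/2) (φ + 1/2)
    · rw [Set.indicator_of_mem hs, Set.indicator_of_mem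
        (show (φ, s) ∈ S from ⟨hs.1, hs.2⟩)]
    · rw [Set.indicator_of_notMem hs, Set.indicator_of_notMem
        (show (φ, s) ∉ S from fun hmem => hs ⟨hmem.1, hmem.2⟩)]
  have hFint : Integrable F (volume.prod volume) := by
    refine ⟨hFmeas.aestronglyMeasurable, ?_⟩
    rw [hasFiniteIntegral_def, MeasureTheory.lintegral_prod_symm _
      hFmeas.enorm.aemeasurable]
    have hinner : ∀ s : ℝ, (∫⁻ φ, ‖F (φ, s)‖ₑ) = ‖f s ^ 2‖ₑ := by
      intro s
      have : (fun φ => ‖F (φ, s)‖ₑ) =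
          Set.indicator (Ico (s - 1/2) (s + 1/2)) (fun _ => ‖f s ^ 2‖ₑ) := by
        funext φ
        by_cases hφ : φ ∈ Ico (s - 1/2) (s + 1/2)
        · rw [Set.indicator_of_mem hφ]
          simp only [hF_def]
          rw [Set.indicator_of_mem (show (φ, s) ∈ S from
            ⟨show φ - 1/2 < s by linarith [hφ.2], show s ≤ φ + 1/2 by linarith [hφ.1]⟩)]
        · rw [Set.indicator_of_notMem hφ]
          simp only [hF_def]
          rw [Set.indicator_of_notMem (show (φ, s) ∉ S from fun hmem => by
            have h1 : φ - 1/2 < s := hmem.1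
            have h2 : s ≤ φ + 1/2 := hmem.2
            exact hφ ⟨by linarith, by linarith⟩)]
          simp
      rw [this, lintegral_indicator measurableSet_Ico]
      simp [Real.volume_Ico]
      norm_num
    rw [lintegral_congr hinner]
    have := hf.integrable_sq.2
    rw [hasFiniteIntegral_def] at this
    exact this
  have hmarg : Integrable (fun φ => ∫ s, F (φ, s)) volume := hFint.integral_prod_left
  refine hmarg.mono' ((hcont.pow 2).aestronglyMeasurable) (Eventually.of_forall fun φ => ?_)
  have hIoc : ∫ s, F (φ, s) = ∫ s in Ioc (φ - 1/2) (φ + 1/2), f s ^ 2 := by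
    rw [hFslice φ, integral_indicator measurableSet_Ioc]
  have hvol1 : volume (Ioc (φ - 1/2) (φ + 1/2)) = 1 := by rw [Real.volume_Ioc]; norm_num
  have e1 : |avg f φ| ≤ ∫ s in Ioc (φ - 1/2) (φ + 1/2), |f s| := by
    rw [avg_eq]
    simpa [Real.norm_eq_abs] using
      norm_integral_le_integral_norm (μ := volume.restrict (Ioc (φ - 1/2) (φ + 1/2))) f
  have e2 : ∫ s in Ioc (φ - 1/2) (φ + 1/2), |f s| ≤
      Real.sqrt (∫ s in Ioc (φ - 1/2) (φ + 1/2), f s ^ 2) := by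
    have := cs_helper hm (E := Ioc (φ - 1/2) (φ + 1/2)) (by rw [hvol1]; exact ENNReal.one_ne_top)
      hf.integrable_sq.integrableOn
    rwa [hvol1, ENNReal.toReal_one, Real.sqrt_one, one_mul] at this
  have hnn : 0 ≤ ∫ s in Ioc (φ - 1/2) (φ + 1/2), f s ^ 2 :=
    setIntegral_nonneg measurableSet_Ioc fun x _ => sq_nonneg _
  calc ‖avg f φ ^ 2‖ = |avg f φ| ^ 2 := by rw [Real.norm_eq_abs, abs_pow]
    _ ≤ Real.sqrt (∫ s in Ioc (φ - 1/2) (φ + 1/2), f s ^ 2) ^ 2 := by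
        apply pow_le_pow_left₀ (abs_nonneg _) (e1.trans e2)
    _ = ∫ s in Ioc (φ - 1/2) (φ + 1/2), f s ^ 2 := Real.sq_sqrt hnn
    _ = ∫ s, F (φ, s) := hIoc.symm

lemma ae_ne (c : ℝ) : ∀ᵐ (x : ℝ), x ≠ c := by
  rw [ae_iff]
  convert Real.volume_singleton (a := c) using 2
  ext x; simp

lemma key {B μ : ℝ → ℝ} (hB : Measurable B) {C : ℝ} (hC0 : 0 ≤ C) (hCb : ∀ x, |B x| ≤ C)
    (hμm : Measurable μ) (hμ : MemLp μ 2 volume) :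
    Tendsto (fun M : ℝ => ∫ φ in (-M)..M, (B φ * avg μ φ - avg B φ * μ φ)) atTop (𝓝 0) := by
  set K := Real.sqrt (∫ s, μ s ^ 2) with hK
  have hK0 : 0 ≤ K := Real.sqrt_nonneg _
  have hμsq := hμ.integrable_sq
  have havgBcont : Continuous (avg B) := avg_continuous (bdd_intervalIntegrable hB hCb)
  have havgμcont : Continuous (avg μ) := avg_continuous (memL2_intervalIntegrable hμ)
  have havgBabs : ∀ φ, |avg B φ| ≤ C := by
    intro φ
    have h1 := intervalIntegral.norm_integral_le_of_norm_le_const (C := C)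
      (f := B) (a := φ - 1/2) (b := φ + 1/2)
      (fun x _ => by simpa [Real.norm_eq_abs] using hCb x)
    rw [avg]
    calc |∫ s in (φ - 1/2)..(φ + 1/2), B s| ≤ C * |φ + 1/2 - (φ - 1/2)| := by
          simpa [Real.norm_eq_abs] using h1
      _ = C := by norm_num
  set S : Set (ℝ × ℝ) := {q : ℝ × ℝ | q.1 - 1/2 < q.2 ∧ q.2 ≤ q.1 + 1/2} with hS_def
  have hSmeas : MeasurableSet S :=
    (measurableSet_lt (measurable_fst.sub measurable_const) measurable_snd).inter
      (measurableSet_le measurable_snd (measurable_fst.add measurable_const))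
  set P : ℝ → ℝ → ℝ := fun M s => ∫ φ in Ioc (-M) M ∩ Ico (s - 1/2) (s + 1/2), B φ with hP
  set Q : ℝ → ℝ → ℝ := fun M s => Set.indicator (Ioc (-M) M) (avg B) s with hQ
  set G : ℝ → ℝ :=
    fun M => ∫ s, Set.indicator {s : ℝ | M - 1/2 < |s|} (fun s => μ s ^ 2) s with hG
  have hEmeas : ∀ M : ℝ, MeasurableSet {s : ℝ | M - 1/2 < |s|} := fun M =>
    measurableSet_lt measurable_const continuous_abs.measurable
  have main : ∀ M : ℝ, 1 ≤ M →
      ‖∫ φ in (-M)..M, (B φ * avg μ φ - avg B φ * μ φ)‖ ≤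
        2 * C * (Real.sqrt 5 * Real.sqrt (G M)) := by
    intro M hM
    have hA : MeasurableSet (Ioc (-M) M) := measurableSet_Ioc
    have hAvol : volume (Ioc (-M) M) ≠ ⊤ := measure_Ioc_lt_top.ne
    -- integrability of the two pieces on Ioc (-M) M
    have i1 : IntegrableOn (fun φ => B φ * avg μ φ) (Ioc (-M) M) volume := by
      refine Integrable.mono' (g := fun _ => C * K)
        (integrableOn_const measure_Ioc_lt_top.ne)
        ((hB.mul havgμcont.measurable).aestronglyMeasurable.restrict)
        (Eventually.of_forall fun φ => ?_)
      rw [Real.norm_eq_abs, abs_mul]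
      exact mul_le_mul (hCb φ) (avg_abs_le hμm hμ φ) (abs_nonneg _) hC0
    have i2 : IntegrableOn (fun φ => avg B φ * μ φ) (Ioc (-M) M) volume := by
      refine Integrable.mono' (g := fun s => C * |μ s|)
        (((integrableOn_of_L2 hμ hAvol).abs).const_mul C)
        ((havgBcont.measurable.mul hμm).aestronglyMeasurable.restrict)
        (Eventually.of_forall fun φ => ?_)
      rw [Real.norm_eq_abs, abs_mul]
      exact mul_le_mul_of_nonneg_right (havgBabs φ) (abs_nonneg _)
    -- J2
    have hJ2 : ∫ φ in Ioc (-M) M, avg B φ * μ φ = ∫ s, μ s * Q M s := by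
      rw [← integral_indicator hA]
      congr 1
      funext s
      simp only [hQ]
      by_cases hs : s ∈ Ioc (-M) M
      · rw [Set.indicator_of_mem hs, Set.indicator_of_mem hs]; ring
      · rw [Set.indicator_of_notMem hs, Set.indicator_of_notMem hs, mul_zero]
    -- the product kernel
    set G2 : ℝ → ℝ → ℝ := fun φ s =>
      Set.indicator (Ioc (-M) M) B φ * Set.indicator S (fun q => μ q.2) (φ, s) with hG2
    have hG2meas : Measurable (Function.uncurry G2) := by
      have : Function.uncurry G2 = fun p : ℝ × ℝ =>
          Set.indicator (Ioc (-M) M) B p.1 * Set.indicator S (fun q => μ q.2) p := by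
        funext p; cases p; rfl
      rw [this]
      exact ((hB.indicator hA).comp measurable_fst).mul
        ((hμm.comp measurable_snd).indicator hSmeas)
    have hslice : ∀ φ : ℝ, (fun s => G2 φ s) = fun s =>
        Set.indicator (Ioc (-M) M) B φ * Set.indicator (Ioc (φ - 1/2) (φ + 1/2)) μ s := by
      intro φ; funext s
      show Set.indicator (Ioc (-M) M) B φ * Set.indicator S (fun q => μ q.2) (φ, s) =
        Set.indicator (Ioc (-M) M) B φ * Set.indicator (Ioc (φ - 1/2) (φ + 1/2)) μ s
      by_cases hs : s ∈ Ioc (φ - 1/2) (φ + 1/2)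
      · rw [Set.indicator_of_mem hs, Set.indicator_of_mem
          (show (φ, s) ∈ S from ⟨hs.1, hs.2⟩)]
      · rw [Set.indicator_of_notMem hs, Set.indicator_of_notMem
          (show (φ, s) ∉ S from fun hmem => hs ⟨hmem.1, hmem.2⟩)]
    have hinner1 : ∀ φ : ℝ, ∫ s, G2 φ s = Set.indicator (Ioc (-M) M) B φ * avg μ φ := by
      intro φ
      rw [hslice φ, integral_const_mul, integral_indicator measurableSet_Ioc, ← avg_eq]
    have hintμIoc : ∀ φ : ℝ, IntegrableOn μ (Ioc (φ - 1/2) (φ + 1/2)) volume :=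
      fun φ => integrableOn_of_L2 hμ measure_Ioc_lt_top.ne
    have hG2int : Integrable (Function.uncurry G2) (volume.prod volume) := by
      rw [integrable_prod_iff hG2meas.aestronglyMeasurable]
      constructor
      · refine Eventually.of_forall fun φ => ?_
        show Integrable (fun s => G2 φ s) volume
        rw [hslice φ]
        exact (((hintμIoc φ).integrable_indicator measurableSet_Ioc).const_mul _)
      · have hbnd : ∀ φ : ℝ, (∫ s, ‖G2 φ s‖) ≤
            Set.indicator (Ioc (-M) M) (fun _ => C * K) φ := by
          intro φ
          have : (fun s => ‖G2 φ s‖) = fun s =>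
              |Set.indicator (Ioc (-M) M) B φ| *
                Set.indicator (Ioc (φ - 1/2) (φ + 1/2)) (fun s => |μ s|) s := by
            funext s
            rw [show G2 φ s = (Ioc (-M) M).indicator B φ *
                (Ioc (φ - 1/2) (φ + 1/2)).indicator μ s from congrFun (hslice φ) s]
            rw [Real.norm_eq_abs, abs_mul]
            congr 1
            rw [← Real.norm_eq_abs, norm_indicator_eq_indicator_norm]
            simp [Real.norm_eq_abs]
          rw [this, integral_const_mul, integral_indicator measurableSet_Ioc]
          by_cases hφ : φ ∈ Ioc (-M) M
          · rw [Set.indicator_of_mem hφ, Set.indicator_of_mem hφ]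
            exact mul_le_mul (hCb φ)
              (le_trans (unit_int_abs_le hμm hμ φ) (le_of_eq hK.symm))
              (setIntegral_nonneg measurableSet_Ioc fun x _ => abs_nonneg _) hC0
          · rw [Set.indicator_of_notMem hφ, Set.indicator_of_notMem hφ]
            simp
        refine Integrable.mono' (g := Set.indicator (Ioc (-M) M) fun _ => C * K)
          ((integrable_indicator_iff hA).mpr (integrableOn_const measure_Ioc_lt_top.ne))
          (hG2meas.aestronglyMeasurable.norm.integral_prod_right')
          (Eventually.of_forall fun φ => ?_)
        rw [Real.norm_of_nonneg (integral_nonneg fun s => norm_nonneg _)]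
        exact hbnd φ
    -- swap
    have hswap := MeasureTheory.integral_integral_swap (f := G2) hG2int
    -- identify LHS of swap with J1
    have hJ1 : ∫ φ in Ioc (-M) M, B φ * avg μ φ = ∫ s, ∫ φ, G2 φ s := by
      rw [← hswap, ← integral_indicator hA]
      congr 1
      funext φ
      rw [hinner1 φ]
      by_cases hφ : φ ∈ Ioc (-M) M
      · rw [Set.indicator_of_mem hφ, Set.indicator_of_mem hφ]
      · rw [Set.indicator_of_notMem hφ, Set.indicator_of_notMem hφ, zero_mul]
    -- identify the inner integral over φ
    have hinner2 : ∀ s : ℝ, (fun φ => G2 φ s) = fun φ =>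
        μ s * Set.indicator (Ioc (-M) M ∩ Ico (s - 1/2) (s + 1/2)) B φ := by
      intro s; funext φ
      show Set.indicator (Ioc (-M) M) B φ * Set.indicator S (fun q => μ q.2) (φ, s) =
        μ s * Set.indicator (Ioc (-M) M ∩ Ico (s - 1/2) (s + 1/2)) B φ
      by_cases hφ1 : φ ∈ Ioc (-M) M
      · by_cases hφ2 : φ ∈ Ico (s - 1/2) (s + 1/2)
        · rw [Set.indicator_of_mem hφ1, Set.indicator_of_mem (show (φ, s) ∈ S from
            ⟨(show φ - 1/2 < s by have := hφ2.2; linarith),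
             (show s ≤ φ + 1/2 by have := hφ2.1; linarith)⟩),
            Set.indicator_of_mem (Set.mem_inter hφ1 hφ2)]
          ring
        · rw [Set.indicator_of_notMem (show (φ, s) ∉ S from fun hmem => by
            have h1 : φ - 1/2 < s := hmem.1
            have h2 : s ≤ φ + 1/2 := hmem.2
            exact hφ2 ⟨by linarith, by linarith⟩),
            Set.indicator_of_notMem
              (fun hmem => hφ2 (Set.mem_of_mem_inter_right hmem))]
          simp
      · rw [Set.indicator_of_notMem hφ1,
          Set.indicator_of_notMem (fun hmem => hφ1 (Set.mem_of_mem_inter_left hmem))]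
        simp
    have hinner2' : ∀ s : ℝ, ∫ φ, G2 φ s = μ s * P M s := by
      intro s
      rw [hinner2 s, integral_const_mul,
        integral_indicator (hA.inter measurableSet_Ico)]
    -- integrability of marginals
    have hμP : Integrable (fun s => μ s * P M s) volume := by
      refine (hG2int.integral_prod_right).congr (Eventually.of_forall fun s => ?_)
      exact hinner2' s
    have hμQ : Integrable (fun s => μ s * Q M s) volume := by
      refine Integrable.mono'
        (IntegrableOn.integrable_indicator
          (((integrableOn_of_L2 hμ hAvol).abs).const_mul C) hA)
        ((hμm.mul (havgBcont.measurable.indicator hA)).aestronglyMeasurable)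
        (Eventually.of_forall fun s => ?_)
      rw [Real.norm_eq_abs, abs_mul]
      simp only [hQ]
      by_cases hs : s ∈ Ioc (-M) M
      · rw [Set.indicator_of_mem hs, Set.indicator_of_mem hs]
        rw [mul_comm]
        exact mul_le_mul_of_nonneg_right (havgBabs s) (abs_nonneg _)
      · rw [Set.indicator_of_notMem hs, Set.indicator_of_notMem hs]
        simp
    -- the difference
    have hD : ∫ φ in (-M)..M, (B φ * avg μ φ - avg B φ * μ φ) =
        ∫ s, (μ s * P M s - μ s * Q M s) := by
      rw [intervalIntegral.integral_of_le (by linarith : -M ≤ M)]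
      rw [integral_sub i1 i2, hJ1, hJ2,
        show (∫ (s : ℝ), ∫ (φ : ℝ), G2 φ s) = ∫ s, μ s * P M s from
          integral_congr_ae (Eventually.of_forall fun s => hinner2' s),
        ← integral_sub hμP hμQ]
    -- bounds on P and Q
    have hPb : ∀ s : ℝ, |P M s| ≤ C := by
      intro s
      have hvol : volume (Ioc (-M) M ∩ Ico (s - 1/2) (s + 1/2)) < ⊤ :=
        lt_of_le_of_lt (measure_mono inter_subset_right)
          (by rw [Real.volume_Ico]; exact ENNReal.ofReal_lt_top)
      have hns := norm_setIntegral_le_of_norm_le_const (C := C) (f := B) hvol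
        (fun x _ => by simpa [Real.norm_eq_abs] using hCb x)
      simp only [hP]
      rw [← Real.norm_eq_abs]
      refine le_trans hns ?_
      have h1 : (volume (Ioc (-M) M ∩ Ico (s - 1/2) (s + 1/2))).toReal ≤ 1 := by
        refine ENNReal.toReal_le_of_le_ofReal zero_le_one ?_
        refine le_trans (measure_mono inter_subset_right) ?_
        rw [Real.volume_Ico]
        exact ENNReal.ofReal_le_ofReal (by norm_num)
      calc C * (volume (Ioc (-M) M ∩ Ico (s - 1/2) (s + 1/2))).toReal
          ≤ C * 1 := mul_le_mul_of_nonneg_left h1 hC0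
        _ = C := mul_one C
    have hQb : ∀ s : ℝ, |Q M s| ≤ C := by
      intro s
      simp only [hQ]
      by_cases hs : s ∈ Ioc (-M) M
      · rw [Set.indicator_of_mem hs]; exact havgBabs s
      · rw [Set.indicator_of_notMem hs, abs_zero]; exact hC0
    set e : Set ℝ := {s : ℝ | M - 1/2 < |s|} ∩ Icc (-(M+2)) (M+2) with he_def
    have hemeas : MeasurableSet e := (hEmeas M).inter measurableSet_Icc
    have hevol : volume e ≠ ⊤ :=
      (lt_of_le_of_lt (measure_mono inter_subset_right) measure_Icc_lt_top).ne
    have hPQ0 : ∀ s : ℝ, s ∉ e → μ s * P M s - μ s * Q M s = 0 := by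
      intro s hs
      rw [he_def, Set.mem_inter_iff, not_and_or] at hs
      rcases hs with hs | hs
      · have habs : |s| ≤ M - 1/2 := le_of_not_gt (by simpa using hs)
        have hsb := abs_le.mp habs
        have hsA : s ∈ Ioc (-M) M := ⟨by linarith [hsb.1], by linarith [hsb.2]⟩
        have hPQeq : P M s = Q M s := by
          simp only [hP, hQ, Set.indicator_of_mem hsA]
          rw [avg_eq]
          refine setIntegral_congr_set ?_
          filter_upwards [ae_ne (s - 1/2), ae_ne (s + 1/2)] with x hx1 hx2
          simp only [Set.mem_inter_iff, Set.mem_Ioc, Set.mem_Ico, eq_iff_iff]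
          constructor
          · rintro ⟨⟨hxa, hxb⟩, hxc, hxd⟩
            exact ⟨lt_of_le_of_ne hxc (Ne.symm hx1), le_of_lt hxd⟩
          · rintro ⟨hxa, hxb⟩
            have hxb' : x < s + 1/2 := lt_of_le_of_ne hxb hx2
            refine ⟨⟨by linarith [hsb.1], by linarith [hsb.2]⟩, le_of_lt hxa, hxb'⟩
        rw [hPQeq, sub_self]
      · rw [Set.mem_Icc, not_and_or, not_le, not_le] at hs
        have hQ0 : Q M s = 0 := by
          simp only [hQ]
          rw [Set.indicator_of_notMem]
          rw [Set.mem_Ioc, not_and_or, not_lt, not_le]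
          rcases hs with h | h
          · exact Or.inl (by linarith)
          · exact Or.inr (by linarith)
        have hP0 : P M s = 0 := by
          simp only [hP]
          have hempty : Ioc (-M) M ∩ Ico (s - 1/2) (s + 1/2) = ∅ := by
            rw [Set.eq_empty_iff_forall_notMem]
            rintro φ ⟨⟨ha, hb⟩, hc, hd⟩
            rcases hs with h | h
            · linarith
            · linarith
          rw [hempty]
          exact setIntegral_empty
        rw [hP0, hQ0, mul_zero, sub_self]
    have hbound : ∀ s : ℝ, |μ s * P M s - μ s * Q M s| ≤
        2 * C * Set.indicator e (fun s => |μ s|) s := by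
      intro s
      by_cases hs : s ∈ e
      · rw [Set.indicator_of_mem hs, ← mul_sub, abs_mul]
        calc |μ s| * |P M s - Q M s| ≤ |μ s| * (2 * C) := by
              refine mul_le_mul_of_nonneg_left ?_ (abs_nonneg _)
              calc |P M s - Q M s| = |P M s + -(Q M s)| := by rw [sub_eq_add_neg]
                _ ≤ |P M s| + |-(Q M s)| := abs_add_le _ _
                _ = |P M s| + |Q M s| := by rw [abs_neg]
                _ ≤ C + C := add_le_add (hPb s) (hQb s)
                _ = 2 * C := by ring
          _ = 2 * C * |μ s| := by ring
      · rw [Set.indicator_of_notMem hs, hPQ0 s hs, abs_zero, mul_zero]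
    rw [hD]
    have hI1 : Integrable (fun s => μ s * P M s - μ s * Q M s) volume := hμP.sub hμQ
    have hI2 : Integrable (fun s => 2 * C * Set.indicator e (fun s => |μ s|) s) volume :=
      (IntegrableOn.integrable_indicator
        ((integrableOn_of_L2 hμ hevol).abs) hemeas).const_mul _
    calc ‖∫ s, (μ s * P M s - μ s * Q M s)‖
        ≤ ∫ s, ‖μ s * P M s - μ s * Q M s‖ := norm_integral_le_integral_norm _
      _ ≤ ∫ s, 2 * C * Set.indicator e (fun s => |μ s|) s :=
          integral_mono hI1.norm hI2 (fun s => by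
            rw [Real.norm_eq_abs]; exact hbound s)
      _ = 2 * C * ∫ s in e, |μ s| := by
          rw [integral_const_mul, integral_indicator hemeas]
      _ ≤ 2 * C * (Real.sqrt (volume e).toReal * Real.sqrt (∫ s in e, μ s ^ 2)) := by
          refine mul_le_mul_of_nonneg_left ?_ (by linarith)
          exact cs_helper hμm hevol hμsq.integrableOn
      _ ≤ 2 * C * (Real.sqrt 5 * Real.sqrt (G M)) := by
          refine mul_le_mul_of_nonneg_left ?_ (by linarith)
          refine mul_le_mul ?_ ?_ (Real.sqrt_nonneg _) (Real.sqrt_nonneg _)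
          · refine Real.sqrt_le_sqrt ?_
            refine ENNReal.toReal_le_of_le_ofReal (by norm_num) ?_
            calc volume e
                ≤ volume (Icc (M - 1/2) (M + 2) ∪ Icc (-(M+2)) (-(M - 1/2))) := by
                  refine measure_mono ?_
                  rintro s ⟨hs1, hs2⟩
                  rw [Set.mem_setOf_eq] at hs1
                  rw [Set.mem_Icc] at hs2
                  rcases lt_abs.mp hs1 with h | h
                  · exact Or.inl ⟨le_of_lt h, hs2.2⟩
                  · exact Or.inr ⟨hs2.1, by linarith⟩
              _ ≤ volume (Icc (M - 1/2) (M + 2)) + volume (Icc (-(M+2)) (-(M - 1/2))) :=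
                  measure_union_le _ _
              _ ≤ ENNReal.ofReal 5 := by
                  rw [Real.volume_Icc, Real.volume_Icc,
                    show M + 2 - (M - 1/2) = (5:ℝ)/2 by ring,
                    show -(M - 1/2) - -(M+2) = (5:ℝ)/2 by ring,
                    ← ENNReal.ofReal_add (by norm_num) (by norm_num)]
                  exact ENNReal.ofReal_le_ofReal (by norm_num)
          · refine Real.sqrt_le_sqrt ?_
            have hmono : ∫ s in e, μ s ^ 2 ≤ ∫ s in {s : ℝ | M - 1/2 < |s|}, μ s ^ 2 :=
              setIntegral_mono_set hμsq.integrableOn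
                (Eventually.of_forall fun s => sq_nonneg _)
                (HasSubset.Subset.eventuallyLE inter_subset_left)
            show ∫ s in e, μ s ^ 2 ≤
              ∫ s, Set.indicator {s : ℝ | M - 1/2 < |s|} (fun s => μ s ^ 2) s
            rw [integral_indicator (hEmeas M)]
            exact hmono
  have step3 : Tendsto G atTop (𝓝 0) := by
    have hDCT := tendsto_integral_filter_of_dominated_convergence (μ := volume) (l := atTop)
      (F := fun (M : ℝ) (s : ℝ) => Set.indicator {t : ℝ | M - 1/2 < |t|} (fun t => μ t ^ 2) s)
      (f := fun _ => (0:ℝ)) (bound := fun s => μ s ^ 2)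
      (Eventually.of_forall fun M =>
        ((hμm.pow_const 2).indicator (hEmeas M)).aestronglyMeasurable)
      (Eventually.of_forall fun M => Eventually.of_forall fun s => by
        show ‖Set.indicator {t : ℝ | M - 1/2 < |t|} (fun t => μ t ^ 2) s‖ ≤ μ s ^ 2
        by_cases hs : s ∈ {t : ℝ | M - 1/2 < |t|}
        · rw [Set.indicator_of_mem hs]
          exact le_of_eq (Real.norm_of_nonneg (sq_nonneg _))
        · rw [Set.indicator_of_notMem hs, norm_zero]
          exact sq_nonneg _)
      hμsq
      (Eventually.of_forall fun s => by
        refine tendsto_const_nhds.congr' ?_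
        filter_upwards [eventually_ge_atTop (|s| + 1/2)] with M hM
        exact (Set.indicator_of_notMem
          (by simp only [Set.mem_setOf_eq, not_lt]; linarith) _).symm)
    simpa [hG] using hDCT
  refine squeeze_zero_norm' (a := fun M => 2 * C * (Real.sqrt 5 * Real.sqrt (G M))) ?_ ?_
  · filter_upwards [eventually_ge_atTop (1:ℝ)] with M hM
    exact main M hM
  · have hsq : Tendsto (fun M => Real.sqrt (G M)) atTop (𝓝 0) := by
      have := (Real.continuous_sqrt.tendsto 0).comp step3
      simpa [Function.comp_def] using this
    have := hsq.const_mul (2 * C * Real.sqrt 5)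
    simpa [mul_assoc] using this

lemma abs_sub_le' (a b : ℝ) : |a - b| ≤ |a| + |b| := by
  calc |a - b| = |a + -b| := by rw [sub_eq_add_neg]
    _ ≤ |a| + |-b| := abs_add_le _ _
    _ = |a| + |b| := by rw [abs_neg]

theorem fixed_point_map_well_defined
    (Φ : ℝ → ℝ) (hΦ : ContDiff ℝ 2 Φ)
    (hN1 : deriv Φ (-1) = -1) (hN2 : deriv Φ 1 = 1)
    (W : ℝ → ℝ) (hWmeas : Measurable W)
    (hW : MemLp (fun φ => Wsh φ - W φ) 2 (volume : Measure ℝ)) :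
    MemLp (fun φ => W φ - deriv Φ (avg W φ)) 2 (volume : Measure ℝ) ∧
    MemLp (fun φ => W φ - avg (fun s => deriv Φ (avg W s)) φ) 2 (volume : Measure ℝ) ∧
    ∀ μ : ℝ → ℝ, MemLp μ 2 (volume : Measure ℝ) →
      Tendsto (fun M : ℝ => ∫ φ in (-M)..M,
          (deriv Φ (avg W φ) * avg μ φ - avg (fun s => deriv Φ (avg W s)) φ * μ φ))
        atTop (𝓝 0) := by
  set g : ℝ → ℝ := fun φ => Wsh φ - W φ with hg_def
  have hgmeas : Measurable g := wsh_meas.sub hWmeas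
  set K := Real.sqrt (∫ s, g s ^ 2) with hKdef
  have hK0 : 0 ≤ K := Real.sqrt_nonneg _
  -- derivative facts
  have hder : Differentiable ℝ Φ ∧ ContDiff ℝ 1 (deriv Φ) := by
    rw [← one_add_one_eq_two] at hΦ
    have h := contDiff_succ_iff_deriv.mp hΦ
    exact ⟨h.1, h.2.2⟩
  have hΦd : Differentiable ℝ (deriv Φ) := hder.2.differentiable one_ne_zero
  have hΦc : Continuous (deriv Φ) := hΦd.continuous
  have hΦ2c : Continuous (deriv (deriv Φ)) := (contDiff_one_iff_deriv.mp hder.2).2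
  -- interval integrability of W
  have hWshII : ∀ a b : ℝ, IntervalIntegrable Wsh volume a b :=
    bdd_intervalIntegrable wsh_meas wsh_abs
  have hWint : ∀ a b : ℝ, IntervalIntegrable W volume a b := by
    intro a b
    have hWeq : W = fun s => Wsh s - g s := by funext s; simp only [hg_def]; ring
    rw [hWeq]
    exact (hWshII a b).sub (memL2_intervalIntegrable hW a b)
  have havgW : ∀ φ, avg W φ = avg Wsh φ - avg g φ := by
    intro φ
    rw [avg, avg, avg, ← intervalIntegral.integral_sub (hWshII _ _)
      (memL2_intervalIntegrable hW _ _)]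
    refine intervalIntegral.integral_congr fun s _ => ?_
    simp only [hg_def]; ring
  have havgWc : Continuous (avg W) := avg_continuous hWint
  have havgWb : ∀ φ, |avg W φ| ≤ 1 + K := by
    intro φ
    rw [havgW φ]
    exact le_trans (abs_sub_le' _ _) (add_le_add (avg_wsh_abs φ)
      ((avg_abs_le hgmeas hW φ).trans (le_of_eq hKdef.symm)))
  -- bounds for deriv Φ and deriv (deriv Φ) on the compact interval
  obtain ⟨L, hL⟩ := (isCompact_Icc (a := -(1+K)) (b := 1+K)).exists_bound_of_continuousOn
    hΦ2c.continuousOn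
  obtain ⟨C1, hC1⟩ := (isCompact_Icc (a := -(1+K)) (b := 1+K)).exists_bound_of_continuousOn
    hΦc.continuousOn
  have hmem : ∀ φ, avg W φ ∈ Icc (-(1+K)) (1+K) := by
    intro φ
    have h := abs_le.mp (havgWb φ)
    exact ⟨h.1, h.2⟩
  have hmem1 : (1:ℝ) ∈ Icc (-(1+K)) (1+K) := ⟨by linarith, by linarith⟩
  have hmemneg1 : (-1:ℝ) ∈ Icc (-(1+K)) (1+K) := ⟨by linarith, by linarith⟩
  have hL0 : 0 ≤ L := le_trans (norm_nonneg _) (hL 1 hmem1)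
  have hC10 : 0 ≤ C1 := le_trans (norm_nonneg _) (hC1 1 hmem1)
  have hlip : ∀ x ∈ Icc (-(1+K)) (1+K), ∀ y ∈ Icc (-(1+K)) (1+K),
      |deriv Φ y - deriv Φ x| ≤ L * |y - x| := by
    intro x hx y hy
    have := Convex.norm_image_sub_le_of_norm_deriv_le (f := deriv Φ)
      (fun z _ => hΦd.differentiableAt) (fun z hz => hL z hz)
      (convex_Icc _ _) hx hy
    simpa [Real.norm_eq_abs] using this
  set B : ℝ → ℝ := fun s => deriv Φ (avg W s) with hBdef
  have hBcont : Continuous B := hΦc.comp havgWc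
  have hBb : ∀ x, |B x| ≤ C1 := fun x => by
    simpa [Real.norm_eq_abs] using hC1 (avg W x) (hmem x)
  -- the key L² membership
  have h1 : MemLp (fun φ => Wsh φ - B φ) 2 volume := by
    have hdom : MemLp (fun φ => L * ‖avg g φ‖ +
        Set.indicator (Icc (-(1/2) : ℝ) (1/2)) (fun _ => 1 + C1) φ) 2 volume :=
      (((avg_memL2 hgmeas hW).norm).const_mul L).add
        (memLp_indicator_const 2 measurableSet_Icc _ (Or.inr measure_Icc_lt_top.ne))
    refine MemLp.of_le hdom
      ((wsh_meas.sub hBcont.measurable).aestronglyMeasurable)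
      (Eventually.of_forall fun φ => ?_)
    have hind0 : 0 ≤ Set.indicator (Icc (-(1/2) : ℝ) (1/2)) (fun _ => 1 + C1) φ :=
      Set.indicator_nonneg (fun _ _ => by linarith) φ
    have hle : |Wsh φ - B φ| ≤ L * ‖avg g φ‖ +
        Set.indicator (Icc (-(1/2) : ℝ) (1/2)) (fun _ => 1 + C1) φ := by
      rcases le_or_gt (1/2 : ℝ) φ with hφ | hφ
      · have hWsh1 : Wsh φ = 1 := by simp [Wsh, show (0:ℝ) ≤ φ by linarith]
        have havg1 : avg Wsh φ = 1 := avg_wsh_of_ge hφ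
        have : |Wsh φ - B φ| ≤ L * ‖avg g φ‖ := by
          rw [hWsh1, hBdef, ← hN2]
          have h := hlip (avg W φ) (hmem φ) 1 hmem1
          have heq : (1:ℝ) - avg W φ = avg g φ := by rw [havgW φ, havg1]; ring
          calc |deriv Φ 1 - deriv Φ (avg W φ)| ≤ L * |1 - avg W φ| := h
            _ = L * ‖avg g φ‖ := by rw [heq, Real.norm_eq_abs]
        linarith
      rcases le_or_gt φ (-(1/2) : ℝ) with hφ' | hφ'
      · have hWsh1 : Wsh φ = -1 := by simp [Wsh, show ¬ (0:ℝ) ≤ φ by linarith]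
        have havg1 : avg Wsh φ = -1 := avg_wsh_of_le hφ'
        have : |Wsh φ - B φ| ≤ L * ‖avg g φ‖ := by
          rw [hWsh1, hBdef, ← hN1]
          have h := hlip (avg W φ) (hmem φ) (-1) hmemneg1
          have heq : (-1:ℝ) - avg W φ = avg g φ := by rw [havgW φ, havg1]; ring
          calc |deriv Φ (-1) - deriv Φ (avg W φ)| ≤ L * |(-1) - avg W φ| := h
            _ = L * ‖avg g φ‖ := by rw [heq, Real.norm_eq_abs]
        linarith
      · have hin : φ ∈ Icc (-(1/2) : ℝ) (1/2) := ⟨by linarith, by linarith⟩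
        rw [Set.indicator_of_mem hin]
        have h1' : |Wsh φ - B φ| ≤ 1 + C1 := by
          refine le_trans (abs_sub_le' _ _) ?_
          exact add_le_add (wsh_abs φ) (hBb φ)
        have h2' : 0 ≤ L * ‖avg g φ‖ := mul_nonneg hL0 (norm_nonneg _)
        linarith
    rw [Real.norm_eq_abs]
    exact hle.trans (le_abs_self _)
  have goal1 : MemLp (fun φ => W φ - deriv Φ (avg W φ)) 2 volume := by
    have heq : (fun φ => W φ - deriv Φ (avg W φ)) = fun φ => (Wsh φ - B φ) - g φ := by
      funext φ; simp only [hg_def, hBdef]; ring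
    rw [heq]
    exact h1.sub hW
  -- Wsh - avg Wsh is L²
  have hmid : MemLp (fun φ => Wsh φ - avg Wsh φ) 2 volume := by
    have hconst : MemLp (Set.indicator (Icc (-(1/2) : ℝ) (1/2)) (fun _ => (2:ℝ))) 2
        (volume : Measure ℝ) :=
      memLp_indicator_const 2 measurableSet_Icc _ (Or.inr measure_Icc_lt_top.ne)
    refine MemLp.of_le hconst
      ((wsh_meas.sub (avg_continuous hWshII).measurable).aestronglyMeasurable)
      (Eventually.of_forall fun φ => ?_)
    by_cases h : φ ∈ Icc (-(1/2) : ℝ) (1/2)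
    · rw [Set.indicator_of_mem h, Real.norm_eq_abs, Real.norm_eq_abs]
      refine le_trans (abs_sub_le' _ _) ?_
      rw [show |(2:ℝ)| = 1 + 1 by norm_num]
      exact add_le_add (wsh_abs φ) (avg_wsh_abs φ)
    · rw [Set.indicator_of_notMem h]
      rw [Set.mem_Icc, not_and_or, not_le, not_le] at h
      rcases h with h | h
      · have hWsh1 : Wsh φ = -1 := by simp [Wsh, show ¬ (0:ℝ) ≤ φ by linarith]
        rw [hWsh1, avg_wsh_of_le (le_of_lt h)]
        simp
      · have hWsh1 : Wsh φ = 1 := by simp [Wsh, show (0:ℝ) ≤ φ by linarith]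
        rw [hWsh1, avg_wsh_of_ge (le_of_lt h)]
        simp
  have goal2 : MemLp (fun φ => W φ - avg B φ) 2 volume := by
    have havgsub : ∀ φ, avg (fun s => Wsh s - B s) φ = avg Wsh φ - avg B φ := by
      intro φ
      rw [avg, avg, avg, ← intervalIntegral.integral_sub (hWshII _ _)
        (hBcont.intervalIntegrable _ _)]
    have heq : (fun φ => W φ - avg B φ) = fun φ =>
        ((Wsh φ - avg Wsh φ) + avg (fun s => Wsh s - B s) φ) - g φ := by
      funext φ
      rw [havgsub φ]
      simp only [hg_def]; ring
    rw [heq]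
    exact (hmid.add (avg_memL2 (wsh_meas.sub hBcont.measurable) h1)).sub hW
  refine ⟨goal1, goal2, ?_⟩
  intro μ hμ
  obtain ⟨ν, hν1, hν2⟩ := hμ.aestronglyMeasurable
  have hνmeas : Measurable ν := hν1.measurable
  have hνL2 : MemLp ν 2 volume := hμ.ae_eq hν2
  have hkey := key hBcont.measurable hC10 hBb hνmeas hνL2
  refine hkey.congr fun M => ?_
  have havgeq : ∀ φ, avg ν φ = avg μ φ := by
    intro φ
    rw [avg, avg]
    refine intervalIntegral.integral_congr_ae ?_
    filter_upwards [hν2] with s hs _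
    exact hs.symm
  refine intervalIntegral.integral_congr_ae ?_
  filter_upwards [hν2] with φ hφ _
  rw [havgeq φ, hφ]
end

section
/- Let U : ℝ → ℝ be a bounded nondecreasing function with U(φ) → u₋ as φ → −∞ and U(φ) → u₊ as φ → +∞. Then for every φ̄ ∈ ℝ the function φ ↦ U(φ + φ̄) − U(φ) is integrable over ℝ and ∫_ℝ (U(φ + φ̄) − U(φ)) dφ = (u₊ − u₋) φ̄. -/
open MeasureTheory Filter Topology Set

lemma shift_integral_aux
    (U : ℝ → ℝ) (hmono : Monotone U)
    (um up : ℝ)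
    (hbot : Tendsto U atBot (𝓝 um)) (htop : Tendsto U atTop (𝓝 up))
    (s : ℝ) (hs : 0 ≤ s) :
    Integrable (fun φ => U (φ + s) - U φ) (volume : Measure ℝ) ∧
    (∫ φ, (U (φ + s) - U φ)) = (up - um) * s := by
  have hmono' : Monotone (fun φ => U (φ + s)) := fun x y h => hmono (by linarith)
  have hUint : ∀ a b : ℝ, IntervalIntegrable U volume a b :=
    fun a b => (hmono.monotoneOn _).intervalIntegrable
  have hUint' : ∀ a b : ℝ, IntervalIntegrable (fun φ => U (φ + s)) volume a b :=
    fun a b => (hmono'.monotoneOn _).intervalIntegrable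
  have hfint : ∀ a b : ℝ, IntervalIntegrable (fun φ => U (φ + s) - U φ) volume a b :=
    fun a b => (hUint' a b).sub (hUint a b)
  have key : ∀ a b : ℝ, (∫ φ in a..b, (U (φ + s) - U φ))
      = (∫ φ in b..(b+s), U φ) - ∫ φ in a..(a+s), U φ := by
    intro a b
    rw [intervalIntegral.integral_sub (hUint' a b) (hUint a b),
      intervalIntegral.integral_comp_add_right]
    have h1 := intervalIntegral.integral_add_adjacent_intervals (hUint (a+s) b) (hUint b (b+s))
    have h2 := intervalIntegral.integral_add_adjacent_intervals (hUint a (a+s)) (hUint (a+s) b)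
    linarith
  -- squeeze bounds for the sliding window integral
  have hlow : ∀ b : ℝ, U b * s ≤ ∫ φ in b..(b+s), U φ := by
    intro b
    have := intervalIntegral.integral_mono_on (by linarith : b ≤ b + s)
      (intervalIntegrable_const (c := U b)) (hUint b (b+s))
      (fun x hx => hmono hx.1)
    simpa [mul_comm] using this
  have hhigh : ∀ b : ℝ, (∫ φ in b..(b+s), U φ) ≤ U (b+s) * s := by
    intro b
    have := intervalIntegral.integral_mono_on (by linarith : b ≤ b + s)
      (hUint b (b+s)) (intervalIntegrable_const (c := U (b+s)))
      (fun x hx => hmono hx.2)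
    simpa [mul_comm] using this
  have ttop : Tendsto (fun b : ℝ => ∫ φ in b..(b+s), U φ) atTop (𝓝 (up * s)) := by
    refine tendsto_of_tendsto_of_tendsto_of_le_of_le (htop.mul_const s)
      ((htop.comp (tendsto_atTop_add_const_right atTop s tendsto_id)).mul_const s)
      (fun b => hlow b) (fun b => hhigh b)
  have tbot : Tendsto (fun a : ℝ => ∫ φ in a..(a+s), U φ) atBot (𝓝 (um * s)) := by
    refine tendsto_of_tendsto_of_tendsto_of_le_of_le (hbot.mul_const s)
      ((hbot.comp (tendsto_atBot_add_const_right atBot s tendsto_id)).mul_const s)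
      (fun b => hlow b) (fun b => hhigh b)
  have main : Tendsto (fun n : ℝ => ∫ φ in (-n)..n, (U (φ + s) - U φ)) atTop
      (𝓝 (up * s - um * s)) := by
    simp only [key]
    exact ttop.sub (tbot.comp tendsto_neg_atTop_atBot)
  have hnn : ∀ φ : ℝ, 0 ≤ U (φ + s) - U φ :=
    fun φ => sub_nonneg.2 (hmono (by linarith))
  have hnorm : ∀ n : ℝ, (∫ φ in (-n)..n, ‖U (φ + s) - U φ‖)
      = ∫ φ in (-n)..n, (U (φ + s) - U φ) := by
    intro n
    exact intervalIntegral.integral_congr (fun x _ => Real.norm_of_nonneg (hnn x))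
  have hint : Integrable (fun φ => U (φ + s) - U φ) (volume : Measure ℝ) := by
    refine integrable_of_intervalIntegral_norm_tendsto (up * s - um * s)
      (fun n : ℝ => ((hfint (-n) n).1)) tendsto_neg_atTop_atBot tendsto_id ?_
    simp only [id_eq, hnorm]
    exact main
  refine ⟨hint, ?_⟩
  have := intervalIntegral_tendsto_integral hint tendsto_neg_atTop_atBot tendsto_id
  have := tendsto_nhds_unique this main
  rw [this]; ring

theorem shift_integral_identity
    (U : ℝ → ℝ) (hb : ∃ C, ∀ φ, |U φ| ≤ C) (hmono : Monotone U)
    (um up : ℝ)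
    (hbot : Tendsto U atBot (𝓝 um)) (htop : Tendsto U atTop (𝓝 up))
    (φbar : ℝ) :
    Integrable (fun φ => U (φ + φbar) - U φ) (volume : Measure ℝ) ∧
    (∫ φ, (U (φ + φbar) - U φ)) = (up - um) * φbar := by
  rcases le_or_gt 0 φbar with h | h
  · exact shift_integral_aux U hmono um up hbot htop φbar h
  · obtain ⟨hg, hgval⟩ := shift_integral_aux U hmono um up hbot htop (-φbar) (by linarith)
    have heq : (fun φ => U (φ + φbar) - U φ)
        = fun φ => -((fun ψ => U (ψ + -φbar) - U ψ) (φ + φbar)) := by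
      funext φ; simp
    have hint : Integrable (fun φ => U (φ + φbar) - U φ) (volume : Measure ℝ) := by
      rw [heq]; exact (hg.comp_add_right φbar).neg
    refine ⟨hint, ?_⟩
    rw [heq]
    rw [integral_neg]
    rw [integral_add_right_eq_self (fun ψ => U (ψ + -φbar) - U ψ) φbar]
    rw [hgval]; ring
end
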